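/- arXiv:2310.02362 — 5 statements merged into one kernel-verified Lean document; each statement's English description precedes it below -/
import Mathlib

section
/- Let y_1, …, y_m ∈ ℝ² be points whose convex hull lies in Ω = {y ∈ ℝ² : y₁² ≤ y₂ ≤ y₁² + 1}, and let z_1, …, z_m ∈ Ω be points such that |z_{k,1} − z_{j,1}| ≤ |y_{k,1} − y_{j,1}| for all j, k, and z_{k,2} − z_{k,1}² ≤ y_{k,2} − y_{k,1}² for all k. Then the convex hull of z_1, …, z_m also lies inside Ω. -/
open MeasureTheory Set

noncomputable section

/-- The horizontal strip `Σ = {x : |x₂| ≤ 1}`. -/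
def SigmaSet : Set (ℝ × ℝ) := {x : ℝ × ℝ | |x.2| ≤ 1}

/-- The parabolic strip `Ω = {y : y₁² ≤ y₂ ≤ y₁² + 1}`. -/
def OmegaSet : Set (ℝ × ℝ) := {y : ℝ × ℝ | y.1 ^ 2 ≤ y.2 ∧ y.2 ≤ y.1 ^ 2 + 1}

/-- `G` is concave along the direction `(β, 1)` on the strip `Σ`:
for every `x ∈ Σ`, `t ↦ G(x₁ + βt, x₂ + t)` is concave on its domain. -/
def ConcaveAlongDir (G : ℝ × ℝ → ℝ) (β : ℝ) : Prop :=
  ∀ x : ℝ × ℝ, x ∈ SigmaSet →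
    ConcaveOn ℝ {t : ℝ | (x.1 + β * t, x.2 + t) ∈ SigmaSet}
      (fun t : ℝ => G (x.1 + β * t, x.2 + t))

/-- `G` is diagonally concave on `Σ`: concave along `(1,1)` and `(-1,1)`. -/
def DiagonallyConcave (G : ℝ × ℝ → ℝ) : Prop :=
  ConcaveAlongDir G 1 ∧ ConcaveAlongDir G (-1)

/-- `G` is concave along the direction `(β, 1)` within the set `S`. -/
def ConcaveAlongDirOn (G : ℝ × ℝ → ℝ) (β : ℝ) (S : Set (ℝ × ℝ)) : Prop :=
  ∀ x ∈ S, ConcaveOn ℝ {t : ℝ | (x.1 + β * t, x.2 + t) ∈ S}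
      (fun t : ℝ => G (x.1 + β * t, x.2 + t))

/-- `G` is diagonally concave on the set `S`. -/
def DiagConcaveOn (G : ℝ × ℝ → ℝ) (S : Set (ℝ × ℝ)) : Prop :=
  ConcaveAlongDirOn G 1 S ∧ ConcaveAlongDirOn G (-1) S

/-- `φ` is a simple martingale (finitely many values, eventually constant in `n`)
with terminal value `φI`. -/
def IsSimpleMartingaleWithLimit {Ω : Type} {m0 : MeasurableSpace Ω} (μ : Measure Ω)
    (F : Filtration ℕ m0) (φ : ℕ → Ω → ℝ) (φI : Ω → ℝ) : Prop :=
  Martingale φ F μ ∧ (Set.range fun p : ℕ × Ω => φ p.1 p.2).Finite ∧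
    ∃ N : ℕ, ∀ n : ℕ, N ≤ n → φ n = φI

/-- `ψ` is a martingale transform of `φ` by the predictable sequence `α`
(the multiplier `α n` used at step `n → n+1` is `F n`-measurable). -/
def IsMartingaleTransform {Ω : Type} {m0 : MeasurableSpace Ω} (μ : Measure Ω)
    (F : Filtration ℕ m0) (φ ψ α : ℕ → Ω → ℝ) : Prop :=
  Martingale ψ F μ ∧ (∀ n, Measurable[F n] (α n)) ∧
    ∀ n : ℕ, ψ (n + 1) = fun ω => ψ n ω + α n ω * (φ (n + 1) ω - φ n ω)

/-- The values `𝔼 f(ψ∞)` over all simple martingales `φ` with `φ₀ = x₂`,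
`‖φ∞‖_{L∞} ≤ 1` and all martingale transforms `ψ` of `φ` with `ψ₀ = x₁` by
predictable sequences with `‖α n‖_{L∞} ≤ 1`. -/
def UValues (f : ℝ → ℝ) (x : ℝ × ℝ) : Set EReal :=
  { r : EReal | ∃ (Ω : Type) (m0 : MeasurableSpace Ω) (μ : Measure Ω),
      IsProbabilityMeasure μ ∧
      ∃ (F : Filtration ℕ m0) (φ ψ α : ℕ → Ω → ℝ) (φI ψI : Ω → ℝ),
        F 0 = ⊥ ∧
        IsSimpleMartingaleWithLimit μ F φ φI ∧
        IsSimpleMartingaleWithLimit μ F ψ ψI ∧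
        IsMartingaleTransform μ F φ ψ α ∧
        φ 0 = (fun _ => x.2) ∧ ψ 0 = (fun _ => x.1) ∧
        (∀ n, ∀ᵐ ω ∂μ, |α n ω| ≤ 1) ∧
        (∀ᵐ ω ∂μ, |φI ω| ≤ 1) ∧
        r = ((∫ ω, f (ψI ω) ∂μ : ℝ) : EReal) }

/-- The Burkholder function `𝕌`. -/
def Ufun (f : ℝ → ℝ) (x : ℝ × ℝ) : EReal := sSup (UValues f x)

/-- The values `𝔼 f(ψ∞)` over all simple martingales `φ` with `φ₀ = x₂`,
`|φ∞| = 1` a.s. and all martingale transforms `ψ` of `φ` with `ψ₀ = x₁` by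
predictable sequences with `|α n| = 1` a.s. -/
def VValues (f : ℝ → ℝ) (x : ℝ × ℝ) : Set EReal :=
  { r : EReal | ∃ (Ω : Type) (m0 : MeasurableSpace Ω) (μ : Measure Ω),
      IsProbabilityMeasure μ ∧
      ∃ (F : Filtration ℕ m0) (φ ψ α : ℕ → Ω → ℝ) (φI ψI : Ω → ℝ),
        F 0 = ⊥ ∧
        IsSimpleMartingaleWithLimit μ F φ φI ∧
        IsSimpleMartingaleWithLimit μ F ψ ψI ∧
        IsMartingaleTransform μ F φ ψ α ∧
        φ 0 = (fun _ => x.2) ∧ ψ 0 = (fun _ => x.1) ∧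
        (∀ n, ∀ᵐ ω ∂μ, |α n ω| = 1) ∧
        (∀ᵐ ω ∂μ, |φI ω| = 1) ∧
        r = ((∫ ω, f (ψI ω) ∂μ : ℝ) : EReal) }

/-- The Burkholder function `𝕍`. -/
def Vfun (f : ℝ → ℝ) (x : ℝ × ℝ) : EReal := sSup (VValues f x)

/-- `‖ζ‖_BMO ≤ 1` in the quadratic sense: for every subinterval of `[0,1]`,
the average of `|ζ - ⟨ζ⟩_I|²` over `I` is at most `1`. -/
def BMOleOne (ζ : ℝ → ℝ) : Prop :=
  ∀ c d : ℝ, 0 ≤ c → c < d → d ≤ 1 →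
    (∫ t in Set.Ioc c d, (ζ t - (d - c)⁻¹ * ∫ s in Set.Ioc c d, ζ s) ^ 2) ≤ d - c

/-- The values `∫₀¹ f(ζ)` over summable `ζ` with `⟨ζ⟩ = y₁`, `⟨ζ²⟩ = y₂`,
`‖ζ‖_BMO ≤ 1`. -/
def BValues (f : ℝ → ℝ) (y : ℝ × ℝ) : Set EReal :=
  { r : EReal | ∃ ζ : ℝ → ℝ,
      IntegrableOn ζ (Set.Icc 0 1) ∧
      IntegrableOn (fun t => ζ t ^ 2) (Set.Icc 0 1) ∧
      (∫ t in Set.Icc (0:ℝ) 1, ζ t) = y.1 ∧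
      (∫ t in Set.Icc (0:ℝ) 1, ζ t ^ 2) = y.2 ∧
      BMOleOne ζ ∧
      IntegrableOn (fun t => f (ζ t)) (Set.Icc 0 1) ∧
      r = ((∫ t in Set.Icc (0:ℝ) 1, f (ζ t) : ℝ) : EReal) }

/-- The Bellman function `𝔹 = 𝔹₁` for BMO. -/
def Bfun (f : ℝ → ℝ) (y : ℝ × ℝ) : EReal := sSup (BValues f y)

def vR (x : ℝ × ℝ) : ℝ := x.1 + 1 - |x.2|

def vL (x : ℝ × ℝ) : ℝ := x.1 - 1 + |x.2|

def SigmaR (v₁ v₂ : ℝ) : Set (ℝ × ℝ) := {x : ℝ × ℝ | x ∈ SigmaSet ∧ vR x ∈ Set.Icc v₁ v₂}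

def SigmaL (v₁ v₂ : ℝ) : Set (ℝ × ℝ) := {x : ℝ × ℝ | x ∈ SigmaSet ∧ vL x ∈ Set.Icc v₁ v₂}

def SigmaRle (v₂ : ℝ) : Set (ℝ × ℝ) := {x : ℝ × ℝ | x ∈ SigmaSet ∧ vR x ≤ v₂}

def SigmaLge (v₁ : ℝ) : Set (ℝ × ℝ) := {x : ℝ × ℝ | x ∈ SigmaSet ∧ v₁ ≤ vL x}

/-- `∂²V/∂x₁²`. -/
def p11 (V : ℝ × ℝ → ℝ) (x : ℝ × ℝ) : ℝ :=
  deriv (fun s => deriv (fun u => V (u, x.2)) s) x.1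

/-- `∂²V/∂x₂²`. -/
def p22 (V : ℝ × ℝ → ℝ) (x : ℝ × ℝ) : ℝ :=
  deriv (fun s => deriv (fun u => V (x.1, u)) s) x.2

/-- `∂²V/∂x₁∂x₂`. -/
def p12 (V : ℝ × ℝ → ℝ) (x : ℝ × ℝ) : ℝ :=
  deriv (fun s => deriv (fun u => V (u, s)) x.1) x.2

/-- The equation `(V₁₁ + V₂₂)² = 4 V₁₂²` at the point `x`. -/
def SolvesStrangeEq (V : ℝ × ℝ → ℝ) (x : ℝ × ℝ) : Prop :=
  (p11 V x + p22 V x) ^ 2 = 4 * p12 V x ^ 2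

/-- `a` is an atom of the σ-algebra `m` with respect to `μ`. -/
def IsAtomOf {Ω : Type} {m0 : MeasurableSpace Ω} (μ : Measure Ω) (m : MeasurableSpace Ω)
    (a : Set Ω) : Prop :=
  MeasurableSet[m] a ∧ 0 < μ a ∧
    ∀ b : Set Ω, MeasurableSet[m] b → b ⊆ a → μ b = 0 ∨ μ (a \ b) = 0

/-- `g` is piecewise monotone with finitely many monotonicity intervals. -/
def PiecewiseMonotone (g : ℝ → ℝ) : Prop :=
  ∃ s : Finset ℝ, ∀ a b : ℝ, a < b → (∀ c ∈ s, c ∉ Set.Ioo a b) →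
    MonotoneOn g (Set.Ioo a b) ∨ AntitoneOn g (Set.Ioo a b)

/-- `∫ e^{-|t|/ε} |dg(t)| < ∞`: `g` is a difference of two monotone (Stieltjes)
functions whose total variation measure integrates `e^{-|t|/ε}`. -/
def FinWeightedVar (g : ℝ → ℝ) (ε : ℝ) : Prop :=
  ∃ G H : StieltjesFunction ℝ, (∀ t, g t = G t - H t) ∧
    (∫⁻ t : ℝ, ENNReal.ofReal (Real.exp (-|t| / ε)) ∂(G.measure + H.measure)) < ⊤

/-- The vertical-herringbone domain `Σ_hrb([a₀,b₀],[a₁,b₁])` (lower half). -/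
def SigmaHrb (a b : ℝ → ℝ) (ℓ₁ ℓ₀ : ℝ) : Set (ℝ × ℝ) :=
  {x : ℝ × ℝ | |x.2| ≤ 1 ∧ x.2 ≤ 0 ∧
    (b ℓ₁ - a ℓ₁) / 2 - |x.1 - (a ℓ₁ + b ℓ₁) / 2| ≤ x.2 + 1 ∧
    x.2 + 1 ≤ (b ℓ₀ - a ℓ₀) / 2 - |x.1 - (a ℓ₀ + b ℓ₀) / 2|}


lemma double_sum_eq {ι : Type} (t : Finset ι) (w a : ι → ℝ)
    (hw : ∑ i ∈ t, w i = 1) :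
    ∑ i ∈ t, ∑ j ∈ t, w i * w j * (a i - a j) ^ 2
      = 2 * ((∑ i ∈ t, w i * a i ^ 2) - (∑ i ∈ t, w i * a i) ^ 2) := by
  have hinner : ∀ i : ι, ∑ j ∈ t, w i * w j * (a i - a j) ^ 2
      = w i * a i ^ 2 * (∑ j ∈ t, w j) - 2 * (w i * a i) * (∑ j ∈ t, w j * a j)
        + w i * (∑ j ∈ t, w j * a j ^ 2) := by
    intro i
    rw [Finset.mul_sum, Finset.mul_sum, Finset.mul_sum, ← Finset.sum_sub_distrib,
      ← Finset.sum_add_distrib]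
    exact Finset.sum_congr rfl fun j _ => by ring
  calc ∑ i ∈ t, ∑ j ∈ t, w i * w j * (a i - a j) ^ 2
      = ∑ i ∈ t, (w i * a i ^ 2 * (∑ j ∈ t, w j) - 2 * (w i * a i) * (∑ j ∈ t, w j * a j)
          + w i * (∑ j ∈ t, w j * a j ^ 2)) := Finset.sum_congr rfl fun i _ => hinner i
    _ = 2 * ((∑ i ∈ t, w i * a i ^ 2) - (∑ i ∈ t, w i * a i) ^ 2) := by
        rw [Finset.sum_add_distrib, Finset.sum_sub_distrib, ← Finset.sum_mul,
          ← Finset.sum_mul, ← Finset.sum_mul, hw]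
        have : ∑ i ∈ t, 2 * (w i * a i) = 2 * ∑ i ∈ t, w i * a i :=
          (Finset.mul_sum _ _ _).symm
        rw [this]
        ring

/-- the shrinking lemma for the parabolic strip `Ω`. -/
theorem statement2 (m : ℕ) (y z : Fin m → ℝ × ℝ)
    (hy : convexHull ℝ (Set.range y) ⊆ OmegaSet)
    (hz : ∀ k, z k ∈ OmegaSet)
    (h1 : ∀ j k, |(z k).1 - (z j).1| ≤ |(y k).1 - (y j).1|)
    (h2 : ∀ k, (z k).2 - (z k).1 ^ 2 ≤ (y k).2 - (y k).1 ^ 2) :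
    convexHull ℝ (Set.range z) ⊆ OmegaSet := by
  classical
  intro p hp
  rw [convexHull_eq] at hp
  obtain ⟨ι, t, w, pts, hw0, hw1, hpts, hcm⟩ := hp
  rw [Finset.centerMass_eq_of_sum_1 _ _ hw1] at hcm
  have htne : t.Nonempty := by
    by_contra h
    rw [Finset.not_nonempty_iff_eq_empty] at h
    subst h
    simp at hw1
  obtain ⟨i₀, hi₀⟩ := htne
  obtain ⟨k₀, hk₀⟩ := hpts i₀ hi₀
  set κ : ι → Fin m := fun i =>
    if h : pts i ∈ Set.range z then h.choose else k₀ with hκ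
  have hzκ : ∀ i ∈ t, z (κ i) = pts i := by
    intro i hi
    have h := hpts i hi
    simp only [hκ, dif_pos h]
    exact h.choose_spec
  have hqmem : (∑ i ∈ t, w i • y (κ i)) ∈ convexHull ℝ (Set.range y) :=
    (convex_convexHull ℝ _).sum_mem hw0 hw1
      (fun i _ => subset_convexHull ℝ _ ⟨κ i, rfl⟩)
  have hqΩ := hy hqmem
  have hq1 : (∑ i ∈ t, w i • y (κ i)).1 = ∑ i ∈ t, w i * (y (κ i)).1 := by
    rw [Prod.fst_sum]; exact Finset.sum_congr rfl fun i _ => rfl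
  have hq2 : (∑ i ∈ t, w i • y (κ i)).2 = ∑ i ∈ t, w i * (y (κ i)).2 := by
    rw [Prod.snd_sum]; exact Finset.sum_congr rfl fun i _ => rfl
  have hpeq : p = ∑ i ∈ t, w i • z (κ i) := by
    rw [← hcm]
    exact (Finset.sum_congr rfl fun i hi => by rw [hzκ i hi]).symm
  have hp1 : p.1 = ∑ i ∈ t, w i * (z (κ i)).1 := by
    rw [hpeq, Prod.fst_sum]; exact Finset.sum_congr rfl fun i _ => rfl
  have hp2 : p.2 = ∑ i ∈ t, w i * (z (κ i)).2 := by
    rw [hpeq, Prod.snd_sum]; exact Finset.sum_congr rfl fun i _ => rfl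
  -- identities
  have hid_z := double_sum_eq t w (fun i => (z (κ i)).1) hw1
  have hid_y := double_sum_eq t w (fun i => (y (κ i)).1) hw1
  -- comparison of double sums
  have hD : ∑ i ∈ t, ∑ j ∈ t, w i * w j * ((z (κ i)).1 - (z (κ j)).1) ^ 2
      ≤ ∑ i ∈ t, ∑ j ∈ t, w i * w j * ((y (κ i)).1 - (y (κ j)).1) ^ 2 := by
    refine Finset.sum_le_sum fun i hi => Finset.sum_le_sum fun j hj => ?_
    have habs := h1 (κ j) (κ i)
    have hsq : ((z (κ i)).1 - (z (κ j)).1) ^ 2 ≤ ((y (κ i)).1 - (y (κ j)).1) ^ 2 := by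
      rw [← sq_abs ((z (κ i)).1 - (z (κ j)).1), ← sq_abs ((y (κ i)).1 - (y (κ j)).1)]
      exact pow_le_pow_left₀ (abs_nonneg _) habs 2
    exact mul_le_mul_of_nonneg_left hsq (mul_nonneg (hw0 i hi) (hw0 j hj))
  have hDz_nonneg : 0 ≤ ∑ i ∈ t, ∑ j ∈ t, w i * w j * ((z (κ i)).1 - (z (κ j)).1) ^ 2 :=
    Finset.sum_nonneg fun i hi => Finset.sum_nonneg fun j hj =>
      mul_nonneg (mul_nonneg (hw0 i hi) (hw0 j hj)) (sq_nonneg _)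
  -- sums comparisons
  have hsum2 : ∑ i ∈ t, (w i * (z (κ i)).2 - w i * (z (κ i)).1 ^ 2)
      ≤ ∑ i ∈ t, (w i * (y (κ i)).2 - w i * (y (κ i)).1 ^ 2) := by
    refine Finset.sum_le_sum fun i hi => ?_
    have := mul_le_mul_of_nonneg_left (h2 (κ i)) (hw0 i hi)
    nlinarith [this]
  have hsum2' : ∑ i ∈ t, (w i * (z (κ i)).2 - w i * (z (κ i)).1 ^ 2)
      = (∑ i ∈ t, w i * (z (κ i)).2) - ∑ i ∈ t, w i * (z (κ i)).1 ^ 2 :=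
    Finset.sum_sub_distrib _ _
  have hsum2'' : ∑ i ∈ t, (w i * (y (κ i)).2 - w i * (y (κ i)).1 ^ 2)
      = (∑ i ∈ t, w i * (y (κ i)).2) - ∑ i ∈ t, w i * (y (κ i)).1 ^ 2 :=
    Finset.sum_sub_distrib _ _
  have hS2c : ∑ i ∈ t, w i * (z (κ i)).1 ^ 2 ≤ ∑ i ∈ t, w i * (z (κ i)).2 :=
    Finset.sum_le_sum fun i hi => mul_le_mul_of_nonneg_left (hz (κ i)).1 (hw0 i hi)
  obtain ⟨hΩ1, hΩ2⟩ := hqΩ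
  rw [hq1, hq2] at hΩ1 hΩ2
  constructor
  · -- lower bound
    rw [hp1, hp2]
    linarith
  · -- upper bound
    rw [hp1, hp2]
    linarith

end
end

section
/- Let φ = {φ_n} be a simple martingale with ‖φ_∞‖_{L∞} ≤ 1, and let ψ = {ψ_n} be a martingale transform of φ by a predictable sequence {α_n} with ‖α_n‖_{L∞} ≤ 1 for every n. Define the ℝ²-valued martingale M_n = (ψ_n, 𝔼(ψ_∞² | F_n)) and M_∞ = (ψ_∞, ψ_∞²). Then: (i) M_∞ takes values in the parabola {y ∈ ℝ² : y₂ = y₁²} and M_n = 𝔼(M_∞ | F_n) for every n; (ii) for every n ≥ 0 and every atom a of F_n, the convex hull of the set of values of M_{n+1} on a is contained in Ω = {y ∈ ℝ² : y₁² ≤ y₂ ≤ y₁² + 1}. In other words, M is an Ω-martingale. -/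
open MeasureTheory Set

noncomputable section

open Filter

lemma ae_const_on_atom {Ω : Type} {m0 : MeasurableSpace Ω} {μ : Measure Ω}
    {m : MeasurableSpace Ω} {a : Set Ω}
    (ha : IsAtomOf μ m a) {f : Ω → ℝ} (hf : Measurable[m] f) :
    ∃ r : ℝ, ∀ᵐ ω ∂μ, ω ∈ a → f ω = r := by
  obtain ⟨hameas, hapos, hatom⟩ := ha
  set b : ℝ → Set Ω := fun r => a ∩ {ω | f ω ≤ r} with hb
  have hbmeas : ∀ r, MeasurableSet[m] (b r) := fun r =>
    hameas.inter (hf measurableSet_Iic)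
  have hbsub : ∀ r, b r ⊆ a := fun r => Set.inter_subset_left
  have hmono : ∀ {r r' : ℝ}, r ≤ r' → b r ⊆ b r' := by
    intro r r' h ω hω
    exact ⟨hω.1, le_trans hω.2 h⟩
  set T : Set ℝ := {r | μ (a \ b r) = 0} with hT
  have hTup : ∀ {r r' : ℝ}, r ∈ T → r ≤ r' → r' ∈ T := by
    intro r r' hr h
    exact measure_mono_null (Set.diff_subset_diff_right (hmono h)) hr
  have hTne : T.Nonempty := by
    by_contra hc
    rw [Set.not_nonempty_iff_eq_empty] at hc
    have hall : ∀ n : ℕ, μ (b n) = 0 := by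
      intro n
      refine (hatom (b n) (hbmeas n) (hbsub n)).resolve_right ?_
      intro h0
      exact absurd (hT ▸ h0 : (n : ℝ) ∈ T) (by rw [hc]; exact Set.notMem_empty _)
    have hsub : a ⊆ ⋃ n : ℕ, b n := by
      intro ω hω
      obtain ⟨n, hn⟩ := exists_nat_ge (f ω)
      exact Set.mem_iUnion.2 ⟨n, hω, hn⟩
    exact absurd (measure_mono_null hsub (measure_iUnion_null hall)) hapos.ne'
  have hnotall : ¬ ∀ n : ℕ, μ (a \ b (-(n : ℝ))) = 0 := by
    intro hall
    have hsub : a ⊆ ⋃ n : ℕ, (a \ b (-(n : ℝ))) := by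
      intro ω hω
      obtain ⟨n, hn⟩ := exists_nat_gt (-(f ω))
      refine Set.mem_iUnion.2 ⟨n, hω, fun hmem => ?_⟩
      have := hmem.2
      simp only [Set.mem_setOf_eq] at this
      linarith
    exact absurd (measure_mono_null hsub (measure_iUnion_null hall)) hapos.ne'
  push_neg at hnotall
  obtain ⟨n₀, hn₀⟩ := hnotall
  have hTbdd : BddBelow T := by
    refine ⟨-(n₀ : ℝ), fun t ht => ?_⟩
    by_contra hlt
    push_neg at hlt
    exact hn₀ (hTup ht hlt.le)
  set r₀ : ℝ := sInf T with hr₀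
  have hclaim1 : ∀ r : ℝ, r₀ < r → μ (a \ b r) = 0 := by
    intro r hr
    obtain ⟨t, ht, htr⟩ := exists_lt_of_csInf_lt hTne hr
    exact hTup ht htr.le
  have hclaim2 : ∀ r : ℝ, r < r₀ → μ (b r) = 0 := by
    intro r hr
    have hrT : r ∉ T := fun hrT => absurd (csInf_le hTbdd hrT) (not_le.2 hr)
    exact (hatom (b r) (hbmeas r) (hbsub r)).resolve_right hrT
  have h1 : μ (⋃ n : ℕ, (a \ b (r₀ + ((n : ℝ) + 1)⁻¹))) = 0 :=
    measure_iUnion_null fun n => hclaim1 _ (by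
      have : (0:ℝ) < ((n : ℝ) + 1)⁻¹ := by positivity
      linarith)
  have h2 : μ (⋃ n : ℕ, b (r₀ - ((n : ℝ) + 1)⁻¹)) = 0 :=
    measure_iUnion_null fun n => hclaim2 _ (by
      have : (0:ℝ) < ((n : ℝ) + 1)⁻¹ := by positivity
      linarith)
  refine ⟨r₀, ?_⟩
  rw [ae_iff]
  apply measure_mono_null ?_ (measure_union_null h1 h2)
  intro ω hω
  simp only [Set.mem_setOf_eq] at hω
  push_neg at hω
  obtain ⟨hωa, hωne⟩ := hω
  rcases lt_or_gt_of_ne hωne with hlt | hgt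
  · refine Set.mem_union_right _ ?_
    obtain ⟨n, hn⟩ := exists_nat_one_div_lt (show (0:ℝ) < r₀ - f ω by linarith)
    rw [one_div] at hn
    exact Set.mem_iUnion.2 ⟨n, hωa, by simp only [Set.mem_setOf_eq]; linarith⟩
  · refine Set.mem_union_left _ ?_
    obtain ⟨n, hn⟩ := exists_nat_one_div_lt (show (0:ℝ) < f ω - r₀ by linarith)
    rw [one_div] at hn
    refine Set.mem_iUnion.2 ⟨n, hωa, fun hmem => ?_⟩
    have := hmem.2
    simp only [Set.mem_setOf_eq] at this
    linarith


lemma bdd_of_finite_range {Ω : Type} {φ : ℕ → Ω → ℝ}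
    (h : (Set.range fun p : ℕ × Ω => φ p.1 p.2).Finite) :
    ∃ C : ℝ, ∀ (k : ℕ) (ω : Ω), |φ k ω| ≤ C := by
  obtain ⟨C, hC⟩ := (h.image fun x => |x|).bddAbove
  exact ⟨C, fun k ω => hC ⟨φ k ω, ⟨(k, ω), rfl⟩, rfl⟩⟩

lemma key_condexp {Ω : Type} {m0 : MeasurableSpace Ω} (μ : Measure Ω)
    [IsProbabilityMeasure μ] (F : Filtration ℕ m0)
    (φ ψ α : ℕ → Ω → ℝ) (φI ψI : Ω → ℝ)
    (hφ : IsSimpleMartingaleWithLimit μ F φ φI)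
    (hψ : IsSimpleMartingaleWithLimit μ F ψ ψI)
    (htr : IsMartingaleTransform μ F φ ψ α)
    (hαbd : ∀ n, ∀ᵐ ω ∂μ, |α n ω| ≤ 1)
    (hφbd : ∀ᵐ ω ∂μ, |φI ω| ≤ 1) (m : ℕ) :
    ∀ᵐ ω ∂μ, ψ m ω ^ 2 ≤ (μ[fun ω' => ψI ω' ^ 2 | F m]) ω ∧
      (μ[fun ω' => ψI ω' ^ 2 | F m]) ω ≤ ψ m ω ^ 2 + 1 - φ m ω ^ 2 := by
  obtain ⟨hφmart, hφfin, Nφ, hNφ⟩ := hφ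
  obtain ⟨hψmart, hψfin, Nψ, hNψ⟩ := hψ
  obtain ⟨-, hαmeas, htrans⟩ := htr
  obtain ⟨Cφ, hCφ⟩ := bdd_of_finite_range hφfin
  obtain ⟨Cψ, hCψ⟩ := bdd_of_finite_range hψfin
  have hΩne : Nonempty Ω := by
    by_contra h
    have h0 : μ Set.univ = 0 := by
      rw [Set.univ_eq_empty_iff.2 (not_nonempty_iff.1 h)]; simp
    rw [measure_univ] at h0; exact one_ne_zero h0
  have hCφ0 : 0 ≤ Cφ := le_trans (abs_nonneg _) (hCφ 0 (Classical.arbitrary Ω))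
  have hCψ0 : 0 ≤ Cψ := le_trans (abs_nonneg _) (hCψ 0 (Classical.arbitrary Ω))
  set N := max (max Nφ Nψ) m with hN
  have hmN : m ≤ N := le_max_right _ _
  have hφN : φ N = φI := hNφ N (le_trans (le_max_left _ _) (le_max_left _ _))
  have hψN : ψ N = ψI := hNψ N (le_trans (le_max_right _ _) (le_max_left _ _))
  have hφsm : ∀ k, StronglyMeasurable[F k] (φ k) := fun k => hφmart.stronglyAdapted k
  have hψsm : ∀ k, StronglyMeasurable[F k] (ψ k) := fun k => hψmart.stronglyAdapted k
  have hInt : ∀ (f : Ω → ℝ) (C : ℝ), AEStronglyMeasurable f μ →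
      (∀ᵐ ω ∂μ, |f ω| ≤ C) → Integrable f μ :=
    fun f C hmeas hb => (integrable_const C).mono' hmeas (by simpa [Real.norm_eq_abs] using hb)
  have hφm0 : ∀ k, Measurable (φ k) := fun k => ((hφsm k).mono (F.le k)).measurable
  have hψm0 : ∀ k, Measurable (ψ k) := fun k => ((hψsm k).mono (F.le k)).measurable
  have hαm0 : ∀ k, Measurable (α k) := fun k => (hαmeas k).mono (F.le k) le_rfl
  have hφint : ∀ k, Integrable (φ k) μ := fun k => hφmart.integrable k
  have hψsqint : ∀ k, Integrable (fun ω => ψ k ω ^ 2) μ := fun k =>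
    hInt _ (Cψ ^ 2) ((hψm0 k).pow_const 2).aestronglyMeasurable
      (Eventually.of_forall fun ω => by
        rw [abs_pow]
        exact pow_le_pow_left₀ (abs_nonneg _) (hCψ k ω) 2)
  have hφsqint : ∀ k, Integrable (fun ω => φ k ω ^ 2) μ := fun k =>
    hInt _ (Cφ ^ 2) ((hφm0 k).pow_const 2).aestronglyMeasurable
      (Eventually.of_forall fun ω => by
        rw [abs_pow]
        exact pow_le_pow_left₀ (abs_nonneg _) (hCφ k ω) 2)
  have hXint : ∀ k, Integrable (fun ω => ψ k ω ^ 2 - φ k ω ^ 2) μ := fun k =>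
    (hψsqint k).sub (hφsqint k)
  have hΔbd : ∀ (k : ℕ) (ω : Ω), |φ (k + 1) ω - φ k ω| ≤ 2 * Cφ := fun k ω => by
    calc |φ (k + 1) ω - φ k ω| ≤ |φ (k + 1) ω| + |φ k ω| := abs_sub _ _
      _ ≤ 2 * Cφ := by have := hCφ (k + 1) ω; have := hCφ k ω; linarith
  -- the tower-zero lemma
  have hzero : ∀ (k : ℕ), m ≤ k → ∀ (g : Ω → ℝ) (C : ℝ), StronglyMeasurable[F k] g →
      (∀ᵐ ω ∂μ, |g ω| ≤ C) →
      μ[fun ω => g ω * (φ (k + 1) ω - φ k ω) | F m] =ᵐ[μ] 0 := by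
    intro k hk g C hg hgC
    have hCnn : 0 ≤ C := by
      obtain ⟨ω, hω⟩ := hgC.exists
      exact le_trans (abs_nonneg _) hω
    have hΔint : Integrable (fun ω => φ (k + 1) ω - φ k ω) μ := (hφint (k + 1)).sub (hφint k)
    have hgΔmeas : AEStronglyMeasurable (fun ω => g ω * (φ (k + 1) ω - φ k ω)) μ :=
      (((hg.mono (F.le k)).measurable).mul ((hφm0 (k + 1)).sub (hφm0 k))).aestronglyMeasurable
    have hgΔint : Integrable (fun ω => g ω * (φ (k + 1) ω - φ k ω)) μ := by
      refine hInt _ (C * (2 * Cφ)) hgΔmeas ?_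
      filter_upwards [hgC] with ω hω
      rw [abs_mul]
      exact mul_le_mul hω (hΔbd k ω) (abs_nonneg _) hCnn
    have hΔ0 : μ[fun ω => φ (k + 1) ω - φ k ω | F k] =ᵐ[μ] 0 := by
      have heqfun : (fun ω => φ (k + 1) ω - φ k ω) = φ (k + 1) - φ k := rfl
      rw [heqfun]
      have h1 : μ[φ (k + 1) - φ k | F k] =ᵐ[μ] μ[φ (k + 1) | F k] - μ[φ k | F k] :=
        condExp_sub (hφint (k + 1)) (hφint k) _
      have h2 : μ[φ (k + 1) | F k] =ᵐ[μ] φ k := hφmart.condExp_ae_eq (Nat.le_succ k)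
      have h3 : μ[φ k | F k] = φ k :=
        condExp_of_stronglyMeasurable (F.le k) (hφsm k) (hφint k)
      filter_upwards [h1, h2] with ω e1 e2
      rw [Pi.zero_apply, e1, Pi.sub_apply, e2, h3, sub_self]
    have hcond : μ[fun ω => g ω * (φ (k + 1) ω - φ k ω) | F k] =ᵐ[μ] 0 := by
      have hpull : μ[g * (fun ω => φ (k + 1) ω - φ k ω) | F k] =ᵐ[μ]
          g * μ[fun ω => φ (k + 1) ω - φ k ω | F k] :=
        condExp_mul_of_stronglyMeasurable_left hg hgΔint hΔint
      refine EventuallyEq.trans ?_ (hpull.trans ?_)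
      · exact EventuallyEq.rfl
      · filter_upwards [hΔ0] with ω e
        rw [Pi.mul_apply, e, Pi.zero_apply, mul_zero]
    calc μ[fun ω => g ω * (φ (k + 1) ω - φ k ω) | F m]
        =ᵐ[μ] μ[μ[fun ω => g ω * (φ (k + 1) ω - φ k ω) | F k] | F m] :=
          (condExp_condExp_of_le (F.mono hk) (F.le k)).symm
      _ =ᵐ[μ] μ[(0 : Ω → ℝ) | F m] := condExp_congr_ae hcond
      _ =ᵐ[μ] 0 := by rw [condExp_zero]
  -- integrability of the correction terms
  have hGmul : ∀ (k : ℕ) (g : Ω → ℝ) (C : ℝ), Measurable g → (∀ᵐ ω ∂μ, |g ω| ≤ C) →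
      Integrable (fun ω => g ω * (φ (k + 1) ω - φ k ω)) μ := by
    intro k g C hg hgC
    have hCnn : 0 ≤ C := by
      obtain ⟨ω, hω⟩ := hgC.exists
      exact le_trans (abs_nonneg _) hω
    refine hInt _ (C * (2 * Cφ)) (hg.mul ((hφm0 (k + 1)).sub (hφm0 k))).aestronglyMeasurable ?_
    filter_upwards [hgC] with ω hω
    rw [abs_mul]
    exact mul_le_mul hω (hΔbd k ω) (abs_nonneg _) hCnn
  have hquadint : ∀ (k : ℕ) (g : Ω → ℝ) (C : ℝ), Measurable g → (∀ᵐ ω ∂μ, |g ω| ≤ C) →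
      Integrable (fun ω => g ω * (φ (k + 1) ω - φ k ω) ^ 2) μ := by
    intro k g C hg hgC
    have hCnn : 0 ≤ C := by
      obtain ⟨ω, hω⟩ := hgC.exists
      exact le_trans (abs_nonneg _) hω
    refine hInt _ (C * (2 * Cφ) ^ 2)
      (hg.mul (((hφm0 (k + 1)).sub (hφm0 k)).pow_const 2)).aestronglyMeasurable ?_
    filter_upwards [hgC] with ω hω
    rw [abs_mul, abs_pow]
    exact mul_le_mul hω (pow_le_pow_left₀ (abs_nonneg _) (hΔbd k ω) 2)
      (pow_nonneg (abs_nonneg _) 2) hCnn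
  have hαsqbd : ∀ k, ∀ᵐ ω ∂μ, |α k ω ^ 2 - 1| ≤ 2 := by
    intro k
    filter_upwards [hαbd k] with ω hω
    have h1 : α k ω ^ 2 ≤ 1 := by rw [← sq_abs]; nlinarith [abs_nonneg (α k ω)]
    have h2 : 0 ≤ α k ω ^ 2 := sq_nonneg _
    rw [abs_le]; constructor <;> linarith
  -- downward step for D_k = E[ψ_k² - φ_k² | F_m]
  have hstepD : ∀ k, m ≤ k →
      μ[fun ω => ψ (k + 1) ω ^ 2 - φ (k + 1) ω ^ 2 | F m] ≤ᵐ[μ]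
        μ[fun ω => ψ k ω ^ 2 - φ k ω ^ 2 | F m] := by
    intro k hk
    set f₁ : Ω → ℝ := fun ω => ψ k ω ^ 2 - φ k ω ^ 2 with hf₁
    set g : Ω → ℝ := fun ω => 2 * (α k ω * ψ k ω - φ k ω) with hgdef
    set f₂ : Ω → ℝ := fun ω => g ω * (φ (k + 1) ω - φ k ω) with hf₂
    set f₃ : Ω → ℝ := fun ω => (α k ω ^ 2 - 1) * (φ (k + 1) ω - φ k ω) ^ 2 with hf₃
    have hgsm : StronglyMeasurable[F k] g :=
      ((((hαmeas k).mul (hψsm k).measurable).sub (hφsm k).measurable).const_mul 2).stronglyMeasurable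
    have hgm0 : Measurable g :=
      (((hαm0 k).mul (hψm0 k)).sub (hφm0 k)).const_mul 2
    have hgC : ∀ᵐ ω ∂μ, |g ω| ≤ 2 * (Cψ + Cφ) := by
      filter_upwards [hαbd k] with ω hω
      have h1 : |α k ω * ψ k ω| ≤ Cψ := by
        rw [abs_mul]
        calc |α k ω| * |ψ k ω| ≤ 1 * Cψ :=
              mul_le_mul hω (hCψ k ω) (abs_nonneg _) zero_le_one
          _ = Cψ := one_mul _
      have h3 : |α k ω * ψ k ω - φ k ω| ≤ Cψ + Cφ := by
        calc |α k ω * ψ k ω - φ k ω| ≤ |α k ω * ψ k ω| + |φ k ω| := abs_sub _ _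
          _ ≤ Cψ + Cφ := add_le_add h1 (hCφ k ω)
      calc |g ω| = 2 * |α k ω * ψ k ω - φ k ω| := by
            simp only [hgdef]; rw [abs_mul, abs_two]
        _ ≤ 2 * (Cψ + Cφ) := by linarith
    have hf₂int : Integrable f₂ μ := hGmul k g (2 * (Cψ + Cφ)) hgm0 hgC
    have hαsqmeas : Measurable (fun ω => α k ω ^ 2 - 1) :=
      ((hαm0 k).pow_const 2).sub measurable_const
    have hf₃int : Integrable f₃ μ := hquadint k _ 2 hαsqmeas (hαsqbd k)
    have hfun : (fun ω => ψ (k + 1) ω ^ 2 - φ (k + 1) ω ^ 2) = f₁ + (f₂ + f₃) := by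
      funext ω
      simp only [Pi.add_apply, hf₁, hf₂, hf₃, hgdef]
      rw [congrFun (htrans k) ω]
      ring
    have hGΔ0 : μ[f₂|F m] =ᵐ[μ] 0 := hzero k hk g (2 * (Cψ + Cφ)) hgsm hgC
    have hbadle : μ[f₃|F m] ≤ᵐ[μ] 0 := by
      refine condExp_nonpos ?_
      filter_upwards [hαbd k] with ω hω
      have h1 : α k ω ^ 2 ≤ 1 := by rw [← sq_abs]; nlinarith [abs_nonneg (α k ω)]
      show f₃ ω ≤ (0 : Ω → ℝ) ω
      simp only [hf₃, Pi.zero_apply]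
      nlinarith [sq_nonneg (φ (k + 1) ω - φ k ω)]
    have h1 : μ[f₁ + (f₂ + f₃)|F m] =ᵐ[μ] μ[f₁|F m] + μ[f₂ + f₃|F m] :=
      condExp_add (hXint k) (hf₂int.add hf₃int) _
    have h2 : μ[f₂ + f₃|F m] =ᵐ[μ] μ[f₂|F m] + μ[f₃|F m] := condExp_add hf₂int hf₃int _
    rw [hfun]
    filter_upwards [h1, h2, hGΔ0, hbadle] with ω e1 e2 e0 e3
    rw [e1, Pi.add_apply, e2, Pi.add_apply]
    simp only [Pi.zero_apply] at e0 e3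
    rw [e0]
    linarith
  -- upward step for E_k = E[ψ_k² | F_m]
  have hstepE : ∀ k, m ≤ k →
      μ[fun ω => ψ k ω ^ 2|F m] ≤ᵐ[μ] μ[fun ω => ψ (k + 1) ω ^ 2|F m] := by
    intro k hk
    set f₁ : Ω → ℝ := fun ω => ψ k ω ^ 2 with hf₁
    set g : Ω → ℝ := fun ω => 2 * (α k ω * ψ k ω) with hgdef
    set f₂ : Ω → ℝ := fun ω => g ω * (φ (k + 1) ω - φ k ω) with hf₂
    set f₃ : Ω → ℝ := fun ω => α k ω ^ 2 * (φ (k + 1) ω - φ k ω) ^ 2 with hf₃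
    have hgsm : StronglyMeasurable[F k] g :=
      (((hαmeas k).mul (hψsm k).measurable).const_mul 2).stronglyMeasurable
    have hgm0 : Measurable g := ((hαm0 k).mul (hψm0 k)).const_mul 2
    have hgC : ∀ᵐ ω ∂μ, |g ω| ≤ 2 * Cψ := by
      filter_upwards [hαbd k] with ω hω
      have h1 : |α k ω * ψ k ω| ≤ Cψ := by
        rw [abs_mul]
        calc |α k ω| * |ψ k ω| ≤ 1 * Cψ :=
              mul_le_mul hω (hCψ k ω) (abs_nonneg _) zero_le_one
          _ = Cψ := one_mul _
      calc |g ω| = 2 * |α k ω * ψ k ω| := by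
            simp only [hgdef]; rw [abs_mul, abs_two]
        _ ≤ 2 * Cψ := by linarith
    have hf₂int : Integrable f₂ μ := hGmul k g (2 * Cψ) hgm0 hgC
    have hαsqbd' : ∀ᵐ ω ∂μ, |α k ω ^ 2| ≤ 1 := by
      filter_upwards [hαbd k] with ω hω
      rw [abs_pow]
      calc |α k ω| ^ 2 ≤ 1 ^ 2 := pow_le_pow_left₀ (abs_nonneg _) hω 2
        _ = 1 := one_pow 2
    have hf₃int : Integrable f₃ μ := hquadint k _ 1 ((hαm0 k).pow_const 2) hαsqbd'
    have hfun : (fun ω => ψ (k + 1) ω ^ 2) = f₁ + (f₂ + f₃) := by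
      funext ω
      simp only [Pi.add_apply, hf₁, hf₂, hf₃, hgdef]
      rw [congrFun (htrans k) ω]
      ring
    have hGΔ0 : μ[f₂|F m] =ᵐ[μ] 0 := hzero k hk g (2 * Cψ) hgsm hgC
    have hbadge : (0 : Ω → ℝ) ≤ᵐ[μ] μ[f₃|F m] := by
      refine condExp_nonneg ?_
      refine Eventually.of_forall fun ω => ?_
      show (0 : Ω → ℝ) ω ≤ f₃ ω
      simp only [hf₃, Pi.zero_apply]
      positivity
    have h1 : μ[f₁ + (f₂ + f₃)|F m] =ᵐ[μ] μ[f₁|F m] + μ[f₂ + f₃|F m] :=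
      condExp_add (hψsqint k) (hf₂int.add hf₃int) _
    have h2 : μ[f₂ + f₃|F m] =ᵐ[μ] μ[f₂|F m] + μ[f₃|F m] := condExp_add hf₂int hf₃int _
    rw [hfun]
    filter_upwards [h1, h2, hGΔ0, hbadge] with ω e1 e2 e0 e3
    rw [e1, Pi.add_apply, e2, Pi.add_apply]
    simp only [Pi.zero_apply] at e0 e3
    rw [e0]
    linarith
  -- induction
  have hD : ∀ k, m ≤ k → μ[fun ω => ψ k ω ^ 2 - φ k ω ^ 2|F m] ≤ᵐ[μ]
      fun ω => ψ m ω ^ 2 - φ m ω ^ 2 := by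
    intro k hk
    induction k, hk using Nat.le_induction with
    | base =>
        rw [condExp_of_stronglyMeasurable (F.le m) (f := fun ω => ψ m ω ^ 2 - φ m ω ^ 2)
          (((hψsm m).measurable.pow_const 2).sub ((hφsm m).measurable.pow_const 2)).stronglyMeasurable
          (hXint m)]
    | succ k hk ih => exact (hstepD k hk).trans ih
  have hE : ∀ k, m ≤ k → (fun ω => ψ m ω ^ 2) ≤ᵐ[μ] μ[fun ω => ψ k ω ^ 2|F m] := by
    intro k hk
    induction k, hk using Nat.le_induction with
    | base =>
        rw [condExp_of_stronglyMeasurable (F.le m)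
          ((hψsm m).measurable.pow_const 2).stronglyMeasurable (hψsqint m)]
    | succ k hk ih => exact ih.trans (hstepE k hk)
  -- final assembly
  have hψIsq : (fun ω' => ψI ω' ^ 2) = fun ω => ψ N ω ^ 2 := by rw [hψN]
  rw [hψIsq]
  have hlow := hE N hmN
  have hupper : μ[fun ω => ψ N ω ^ 2|F m] ≤ᵐ[μ] fun ω => ψ m ω ^ 2 + 1 - φ m ω ^ 2 := by
    have hsplit : (fun ω => ψ N ω ^ 2) =
        (fun ω => ψ N ω ^ 2 - φ N ω ^ 2) + fun ω => φ N ω ^ 2 := by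
      funext ω
      simp only [Pi.add_apply]
      ring
    have hadd : μ[fun ω => ψ N ω ^ 2|F m] =ᵐ[μ]
        μ[fun ω => ψ N ω ^ 2 - φ N ω ^ 2|F m] + μ[fun ω => φ N ω ^ 2|F m] := by
      rw [hsplit]
      exact condExp_add (hXint N) (hφsqint N) _
    have hφ1 : μ[fun ω => φ N ω ^ 2|F m] ≤ᵐ[μ] fun _ => (1 : ℝ) := by
      have hle : (fun ω => φ N ω ^ 2) ≤ᵐ[μ] fun _ => (1 : ℝ) := by
        filter_upwards [hφbd] with ω hω
        show φ N ω ^ 2 ≤ 1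
        rw [hφN, ← sq_abs]
        nlinarith [abs_nonneg (φI ω)]
      calc μ[fun ω => φ N ω ^ 2|F m] ≤ᵐ[μ] μ[fun _ => (1 : ℝ)|F m] :=
            condExp_mono (hφsqint N) (integrable_const 1) hle
        _ =ᵐ[μ] fun _ => (1 : ℝ) := by rw [condExp_const (F.le m)]
    filter_upwards [hadd, hD N hmN, hφ1] with ω e1 e2 e3
    rw [e1, Pi.add_apply]
    linarith
  filter_upwards [hlow, hupper] with ω h1 h2
  exact ⟨h1, h2⟩


/-- `M_n = (ψ_n, 𝔼(ψ∞² | F_n))` is an `Ω`-martingale. -/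
theorem statement4 {Ω : Type} {m0 : MeasurableSpace Ω} (μ : Measure Ω)
    [IsProbabilityMeasure μ] (F : Filtration ℕ m0)
    (φ ψ α : ℕ → Ω → ℝ) (φI ψI : Ω → ℝ)
    (hF0 : F 0 = ⊥)
    (hatoms : ∀ n, ∃ S : Set (Set Ω), S.Countable ∧ (∀ a ∈ S, IsAtomOf μ (F n) a) ∧
      F n = MeasurableSpace.generateFrom S)
    (hφ : IsSimpleMartingaleWithLimit μ F φ φI)
    (hψ : IsSimpleMartingaleWithLimit μ F ψ ψI)
    (htr : IsMartingaleTransform μ F φ ψ α)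
    (hαbd : ∀ n, ∀ᵐ ω ∂μ, |α n ω| ≤ 1)
    (hφbd : ∀ᵐ ω ∂μ, |φI ω| ≤ 1) :
    (∀ ω : Ω, ((ψI ω, ψI ω ^ 2) : ℝ × ℝ) ∈ {y : ℝ × ℝ | y.2 = y.1 ^ 2}) ∧
    (∀ n, ∀ᵐ ω ∂μ,
      ((ψ n ω, (μ[fun ω' => ψI ω' ^ 2 | F n]) ω) : ℝ × ℝ) =
        ((μ[ψI | F n]) ω, (μ[fun ω' => ψI ω' ^ 2 | F n]) ω)) ∧
    (∀ n : ℕ, ∀ a : Set Ω, IsAtomOf μ (F n) a →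
      ∃ C : Set (ℝ × ℝ), Convex ℝ C ∧ C ⊆ OmegaSet ∧
        ∀ᵐ ω ∂μ, ω ∈ a →
          ((ψ (n + 1) ω, (μ[fun ω' => ψI ω' ^ 2 | F (n + 1)]) ω) : ℝ × ℝ) ∈ C) := by
  classical
  refine ⟨fun ω => rfl, ?_, ?_⟩
  · intro n
    obtain ⟨hψmart, hψfin, Nψ, hNψ⟩ := hψ
    have h1 : μ[ψ (max n Nψ)|F n] =ᵐ[μ] ψ n := hψmart.condExp_ae_eq (le_max_left _ _)
    rw [hNψ (max n Nψ) (le_max_right _ _)] at h1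
    filter_upwards [h1] with ω h
    rw [← h]
  · intro n a ha
    obtain ⟨s, hs⟩ := ae_const_on_atom ha (hψ.1.stronglyAdapted n).measurable
    obtain ⟨c, hc⟩ := ae_const_on_atom ha (hφ.1.stronglyAdapted n).measurable
    obtain ⟨α₀, hα0⟩ := ae_const_on_atom ha (htr.2.1 n)
    have hα₀le : |α₀| ≤ 1 := by
      by_contra hgt
      have h0 : μ a = 0 := by
        refine measure_mono_null (fun ω hω => ?_) (ae_iff.1 ((hα0.and (hαbd n))))
        simp only [Set.mem_setOf_eq]
        intro hPQ
        exact hgt (by rw [← hPQ.1 hω]; exact hPQ.2)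
      exact absurd h0 ha.2.1.ne'
    have hkey := key_condexp μ F φ ψ α φI ψI hφ hψ htr hαbd hφbd (n + 1)
    have htrn := htr.2.2 n
    by_cases hα₀ : α₀ = 0
    · refine ⟨{y : ℝ × ℝ | y.1 = s ∧ y.1 ^ 2 ≤ y.2 ∧ y.2 ≤ y.1 ^ 2 + 1}, ?_, ?_, ?_⟩
      · rintro ⟨u1, u2⟩ ⟨hu0, hu1, hu2⟩ ⟨v1, v2⟩ ⟨hv0, hv1, hv2⟩ p q hp hq hpq
        simp only [Set.mem_setOf_eq, Prod.smul_mk, Prod.mk_add_mk, smul_eq_mul] at *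
        rw [hu0] at hu1 hu2
        rw [hv0] at hv1 hv2
        have he : p * u1 + q * v1 = s := by
          rw [hu0, hv0]; linear_combination s * hpq
        refine ⟨he, ?_, ?_⟩
        · rw [he]
          nlinarith [mul_le_mul_of_nonneg_left hu1 hp, mul_le_mul_of_nonneg_left hv1 hq]
        · rw [he]
          nlinarith [mul_le_mul_of_nonneg_left hu2 hp, mul_le_mul_of_nonneg_left hv2 hq]
      · rintro ⟨y1, y2⟩ ⟨-, h1, h2⟩
        exact ⟨h1, h2⟩
      · filter_upwards [hkey, hs, hc, hα0] with ω hk hsω hcω hαω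
        intro hωa
        have h1 : ψ (n + 1) ω = ψ n ω + α n ω * (φ (n + 1) ω - φ n ω) := congrFun htrn ω
        have hfst : ψ (n + 1) ω = s := by
          rw [h1, hsω hωa, hαω hωa, hα₀]; ring
        refine ⟨hfst, hk.1, ?_⟩
        have := sq_nonneg (φ (n + 1) ω)
        have hk2 := hk.2
        linarith
    · set β := α₀⁻¹ with hβdef
      have hβα : β * α₀ = 1 := inv_mul_cancel₀ hα₀
      have hβ : 1 ≤ β ^ 2 := by
        have h1 : α₀ ^ 2 ≤ 1 := by rw [← sq_abs]; nlinarith [abs_nonneg α₀]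
        have h2 : β ^ 2 * α₀ ^ 2 = 1 := by rw [← mul_pow, hβα, one_pow]
        nlinarith [sq_nonneg β]
      refine ⟨{y : ℝ × ℝ | y.1 ^ 2 ≤ y.2 ∧ y.2 ≤ y.1 ^ 2 + 1 - (c + β * (y.1 - s)) ^ 2},
        ?_, ?_, ?_⟩
      · rintro ⟨u1, u2⟩ ⟨hu1, hu2⟩ ⟨v1, v2⟩ ⟨hv1, hv2⟩ p q hp hq hpq
        simp only [Set.mem_setOf_eq, Prod.smul_mk, Prod.mk_add_mk, smul_eq_mul] at *
        have hq' : q = 1 - p := by linarith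
        subst hq'
        have hp1 : (0:ℝ) ≤ 1 - p := by linarith
        constructor
        · nlinarith [mul_le_mul_of_nonneg_left hu1 hp,
            mul_le_mul_of_nonneg_left hv1 hp1,
            mul_nonneg (mul_nonneg hp hp1) (sq_nonneg (u1 - v1))]
        · nlinarith [mul_le_mul_of_nonneg_left hu2 hp,
            mul_le_mul_of_nonneg_left hv2 hp1,
            mul_nonneg (mul_nonneg hp hp1)
              (mul_nonneg (sub_nonneg.2 hβ) (sq_nonneg (u1 - v1)))]
      · rintro ⟨y1, y2⟩ ⟨h1, h2⟩
        refine ⟨h1, ?_⟩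
        have := sq_nonneg (c + β * (y1 - s))
        simp only at h2 ⊢
        linarith
      · filter_upwards [hkey, hs, hc, hα0] with ω hk hsω hcω hαω
        intro hωa
        have h1 : ψ (n + 1) ω = ψ n ω + α n ω * (φ (n + 1) ω - φ n ω) := congrFun htrn ω
        have heq' : ψ (n + 1) ω - s = α₀ * (φ (n + 1) ω - c) := by
          rw [h1, hsω hωa, hcω hωa, hαω hωa]; ring
        have hφrel : c + β * (ψ (n + 1) ω - s) = φ (n + 1) ω := by
          linear_combination β * heq' + (φ (n + 1) ω - c) * hβα
        refine ⟨hk.1, ?_⟩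
        show (μ[fun ω' => ψI ω' ^ 2|F (n + 1)]) ω ≤
          ψ (n + 1) ω ^ 2 + 1 - (c + β * (ψ (n + 1) ω - s)) ^ 2
        rw [hφrel]
        have hk2 := hk.2
        linarith

end
end

section
/- Let f : ℝ → ℝ be twice continuously differentiable, let v₁ < v₂, and let m be a twice continuously differentiable function on [v₁, v₂] satisfying the differential equation m'(v) + m(v) − f'(v) = 0 and the inequality m''(v) ≤ 0 for all v ∈ [v₁, v₂]. Define v_R(x) = x₁ + 1 − |x₂| and V(x) = m(v_R(x))·(x₁ − v_R(x)) + f(v_R(x)) on Σ_R(v₁,v₂) = {x ∈ Σ : v_R(x) ∈ [v₁, v₂]}. Then V is C¹-smooth and diagonally concave on Σ_R(v₁,v₂), and at every interior point with x₂ ≠ 0 it satisfies (∂²V/∂x₁² + ∂²V/∂x₂²)² = 4(∂²V/∂x₁∂x₂)². -/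
open MeasureTheory Set

noncomputable section

namespace St9

theorem concaveOn_congr {S : Set ℝ} {F G : ℝ → ℝ} (h : ConcaveOn ℝ S F)
    (hFG : ∀ t ∈ S, F t = G t) : ConcaveOn ℝ S G := by
  refine ⟨h.1, fun a ha b hb p q hp hq hpq => ?_⟩
  have hmem := h.1 ha hb hp hq hpq
  rw [← hFG _ ha, ← hFG _ hb, ← hFG _ hmem]
  exact h.2 ha hb hp hq hpq

theorem concaveOn_comp_neg {S : Set ℝ} {F : ℝ → ℝ} (h : ConcaveOn ℝ S F) :
    ConcaveOn ℝ {t : ℝ | -t ∈ S} (fun t => F (-t)) := by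
  constructor
  · intro a ha b hb p q hp hq hpq
    show -(p • a + q • b) ∈ S
    have h2 := h.1 ha hb hp hq hpq
    have e : p • (-a) + q • (-b) = -(p • a + q • b) := by simp [smul_eq_mul]; ring
    rwa [e] at h2
  · intro a ha b hb p q hp hq hpq
    have h2 := h.2 ha hb hp hq hpq
    have e : p • (-a) + q • (-b) = -(p • a + q • b) := by simp [smul_eq_mul]; ring
    rw [e] at h2
    exact h2

/-- 2D master derivative lemma. -/
theorem dmain (φ F : ℝ → ℝ) (hφ : Differentiable ℝ φ) (hF : Differentiable ℝ F) (σ : ℝ)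
    (y : ℝ × ℝ) :
    HasFDerivAt (fun y : ℝ × ℝ => φ (y.1 + 1 - σ*y.2) * (σ*y.2 - 1) + F (y.1 + 1 - σ*y.2))
      ((deriv φ (y.1+1-σ*y.2) * (σ*y.2-1) + deriv F (y.1+1-σ*y.2)) • ContinuousLinearMap.fst ℝ ℝ ℝ
        + (-σ * deriv φ (y.1+1-σ*y.2) * (σ*y.2-1) + σ * φ (y.1+1-σ*y.2)
            - σ * deriv F (y.1+1-σ*y.2)) • ContinuousLinearMap.snd ℝ ℝ ℝ) y := by
  set A : (ℝ × ℝ) →L[ℝ] ℝ := ContinuousLinearMap.fst ℝ ℝ ℝ - σ • ContinuousLinearMap.snd ℝ ℝ ℝ with hA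
  have hu : HasFDerivAt (fun y : ℝ × ℝ => y.1 + 1 - σ*y.2) A y := by
    have h1 : HasFDerivAt (fun y : ℝ × ℝ => y.1 + 1) (ContinuousLinearMap.fst ℝ ℝ ℝ) y :=
      (hasFDerivAt_fst (p := y)).add_const 1
    have h2 : HasFDerivAt (fun y : ℝ × ℝ => σ * y.2) (σ • ContinuousLinearMap.snd ℝ ℝ ℝ) y :=
      (hasFDerivAt_snd (p := y)).const_mul σ
    exact h1.sub h2
  have hφu : HasFDerivAt (fun y : ℝ × ℝ => φ (y.1 + 1 - σ*y.2))
      (deriv φ (y.1+1-σ*y.2) • A) y := ((hφ _).hasDerivAt.comp_hasFDerivAt y hu)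
  have hFu : HasFDerivAt (fun y : ℝ × ℝ => F (y.1 + 1 - σ*y.2))
      (deriv F (y.1+1-σ*y.2) • A) y := ((hF _).hasDerivAt.comp_hasFDerivAt y hu)
  have hlin : HasFDerivAt (fun y : ℝ × ℝ => σ*y.2 - 1) (σ • ContinuousLinearMap.snd ℝ ℝ ℝ) y :=
    ((hasFDerivAt_snd (p := y)).const_mul σ).sub_const 1
  refine ((hφu.mul hlin).add hFu).congr_fderiv ?_
  refine ContinuousLinearMap.ext fun v => ?_
  simp [A, ContinuousLinearMap.smul_apply, ContinuousLinearMap.add_apply,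
    ContinuousLinearMap.sub_apply]
  ring

section Main

variable {f m : ℝ → ℝ} {v₁ v₂ : ℝ}

/-- modified `f` solving the ODE globally -/
def F (f m : ℝ → ℝ) (v₁ : ℝ) (v : ℝ) : ℝ := f v₁ + ∫ t in v₁..v, (deriv m t + m t)

/-- the global extension of `V` -/
def Vt (f m : ℝ → ℝ) (v₁ : ℝ) (x : ℝ × ℝ) : ℝ :=
  m (x.1 + 1 - |x.2|) * (|x.2| - 1) + F f m v₁ (x.1 + 1 - |x.2|)

/-- candidate derivative of `Vt` -/
def L (m : ℝ → ℝ) (x : ℝ × ℝ) : (ℝ × ℝ) →L[ℝ] ℝ :=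
  (deriv m (x.1 + 1 - |x.2|) * |x.2| + m (x.1 + 1 - |x.2|)) • ContinuousLinearMap.fst ℝ ℝ ℝ
    + (-(deriv m (x.1 + 1 - |x.2|) * x.2)) • ContinuousLinearMap.snd ℝ ℝ ℝ

variable (hf : ContDiff ℝ 2 f) (hm : ContDiff ℝ 2 m)

section Reg
include hm

theorem m1 : Differentiable ℝ m := hm.differentiable (by norm_num)

theorem dm1 : Differentiable ℝ (deriv m) := by
  have h2 : ContDiff ℝ (1+1) m := by norm_num at hm ⊢; exact hm
  exact (contDiff_succ_iff_deriv.mp h2).2.2.differentiable (by norm_num)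

theorem cm2 : Continuous (deriv (deriv m)) := by
  have h2 : ContDiff ℝ (1+1) m := by norm_num at hm ⊢; exact hm
  exact (contDiff_one_iff_deriv.mp (contDiff_succ_iff_deriv.mp h2).2.2).2

theorem hasDerivAt_F (v : ℝ) : HasDerivAt (F f m v₁) (deriv m v + m v) v := by
  have hc : Continuous (fun t => deriv m t + m t) :=
    ((dm1 hm).continuous).add (m1 hm).continuous
  exact ((hc.integral_hasStrictDerivAt v₁ v).hasDerivAt).const_add (f v₁)

theorem F1 : Differentiable ℝ (F f m v₁) := fun v => (hasDerivAt_F hm v).differentiableAt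

theorem derivF (v : ℝ) : deriv (F f m v₁) v = deriv m v + m v := (hasDerivAt_F hm v).deriv

end Reg

include hf hm in
theorem F_eq (hode : ∀ v ∈ Set.Icc v₁ v₂, deriv m v + m v - deriv f v = 0)
    (v : ℝ) (hv : v ∈ Set.Icc v₁ v₂) : F f m v₁ v = f v := by
  have h1 : (∫ t in v₁..v, (deriv m t + m t)) = ∫ t in v₁..v, deriv f t := by
    apply intervalIntegral.integral_congr
    intro t ht
    rw [Set.uIcc_of_le hv.1] at ht
    have := hode t ⟨ht.1, le_trans ht.2 hv.2⟩
    show deriv m t + m t = deriv f t; linarith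
  have h2 : (∫ t in v₁..v, deriv f t) = f v - f v₁ := by
    apply intervalIntegral.integral_deriv_eq_sub
    · intro t _; exact (hf.differentiable (by norm_num)) t
    · exact ((contDiff_one_iff_deriv.mp (by
        have h2 : ContDiff ℝ (1+1) f := by norm_num at hf ⊢; exact hf
        exact (contDiff_succ_iff_deriv.mp h2).2.2)).1.continuous).intervalIntegrable _ _
  simp [F, h1, h2]

include hm in
theorem hVtL (x : ℝ × ℝ) : HasFDerivAt (Vt f m v₁) (L m x) x := by
  have hφ := m1 hm
  have hF : Differentiable ℝ (F f m v₁) := F1 hm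
  -- case on the sign of x.2
  rcases lt_trichotomy x.2 0 with h2 | h2 | h2
  · -- x.2 < 0 : Vt agrees with the σ = -1 branch near x
    have hev : ∀ᶠ y : ℝ × ℝ in nhds x, Vt f m v₁ y =
        m (y.1 + 1 - (-1)*y.2) * ((-1)*y.2 - 1) + F f m v₁ (y.1 + 1 - (-1)*y.2) := by
      have : ∀ᶠ y : ℝ × ℝ in nhds x, y.2 < 0 :=
        (isOpen_lt (continuous_snd) continuous_const).eventually_mem h2
      exact this.mono fun y hy => by
        have : |y.2| = (-1)*y.2 := by rw [abs_of_neg hy]; ring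
        simp only [Vt, this]
    refine (((dmain m (F f m v₁) hφ hF (-1) x).congr_of_eventuallyEq hev).congr_fderiv ?_)
    have habs : |x.2| = (-1)*x.2 := by rw [abs_of_neg h2]; ring
    rw [L, habs]
    congr 1
    · congr 1
      rw [derivF hm]; ring
    · congr 1
      rw [derivF hm]; ring
  · -- x.2 = 0 : glue the two one-sided derivatives
    have key : ∀ σ : ℝ, σ = 1 ∨ σ = -1 →
        HasFDerivWithinAt (Vt f m v₁) (L m x) {y : ℝ × ℝ | 0 ≤ σ * y.2} x := by
      intro σ hσ
      have hd := (dmain m (F f m v₁) hφ hF σ x).hasFDerivWithinAt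
        (s := {y : ℝ × ℝ | 0 ≤ σ * y.2})
      have heq : ∀ y ∈ {y : ℝ × ℝ | 0 ≤ σ * y.2}, Vt f m v₁ y =
          m (y.1 + 1 - σ*y.2) * (σ*y.2 - 1) + F f m v₁ (y.1 + 1 - σ*y.2) := by
        intro y hy
        have habs : |y.2| = σ * y.2 := by
          rcases hσ with h | h <;> subst h
          · have hy' : 0 ≤ y.2 := by have := hy; simp only [mem_setOf_eq, one_mul] at this; exact this
            rw [abs_of_nonneg hy']; ring
          · have hy' : y.2 ≤ 0 := by have := hy; simp only [mem_setOf_eq, neg_one_mul] at this; linarith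
            rw [abs_of_nonpos hy']; ring
        simp only [Vt, habs]
      have hx : Vt f m v₁ x =
          m (x.1 + 1 - σ*x.2) * (σ*x.2 - 1) + F f m v₁ (x.1 + 1 - σ*x.2) :=
        heq x (by simp [h2])
      refine (hd.congr heq hx).congr_fderiv ?_
      rw [L, h2]
      rcases hσ with h | h <;> subst h <;>
        (congr 1 <;> (congr 1; rw [derivF hm]; simp; try ring))
    have h1 := key 1 (Or.inl rfl)
    have h2' := key (-1) (Or.inr rfl)
    have hu : ({y : ℝ × ℝ | 0 ≤ (1:ℝ) * y.2} ∪ {y : ℝ × ℝ | 0 ≤ (-1:ℝ) * y.2}) = univ := by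
      ext y; simp only [mem_union, mem_setOf_eq, mem_univ, iff_true]
      rcases le_total 0 y.2 with h | h
      · left; linarith
      · right; linarith
    have := h1.union h2'
    rw [hu] at this
    exact this.hasFDerivAt_of_univ
  · -- x.2 > 0
    have hev : ∀ᶠ y : ℝ × ℝ in nhds x, Vt f m v₁ y =
        m (y.1 + 1 - 1*y.2) * (1*y.2 - 1) + F f m v₁ (y.1 + 1 - 1*y.2) := by
      have : ∀ᶠ y : ℝ × ℝ in nhds x, 0 < y.2 :=
        (isOpen_lt continuous_const continuous_snd).eventually_mem h2
      exact this.mono fun y hy => by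
        have : |y.2| = 1*y.2 := by rw [abs_of_pos hy]; ring
        simp only [Vt, this]
    refine (((dmain m (F f m v₁) hφ hF 1 x).congr_of_eventuallyEq hev).congr_fderiv ?_)
    have habs : |x.2| = 1*x.2 := by rw [abs_of_pos h2]; ring
    rw [L, habs]
    congr 1
    · congr 1
      rw [derivF hm]; ring
    · congr 1
      rw [derivF hm]; ring

include hm in
theorem hLcont : Continuous (L m) := by
  have hc : Continuous fun x : ℝ × ℝ => x.1 + 1 - |x.2| :=
    (continuous_fst.add continuous_const).sub (continuous_snd.abs)
  have h1 : Continuous fun x : ℝ × ℝ => deriv m (x.1 + 1 - |x.2|) * |x.2| + m (x.1 + 1 - |x.2|) :=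
    (((dm1 hm).continuous.comp hc).mul continuous_snd.abs).add ((m1 hm).continuous.comp hc)
  have h2 : Continuous fun x : ℝ × ℝ => -(deriv m (x.1 + 1 - |x.2|) * x.2) :=
    (((dm1 hm).continuous.comp hc).mul continuous_snd).neg
  exact (h1.smul continuous_const).add (h2.smul continuous_const)

include hm in
theorem hVt1 : ContDiff ℝ 1 (Vt f m v₁) := by
  rw [contDiff_one_iff_fderiv]
  refine ⟨fun x => (hVtL hm x).differentiableAt, ?_⟩
  have : fderiv ℝ (Vt f m v₁) = L m := funext fun x => (hVtL hm x).fderiv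
  rw [this]; exact hLcont hm

include hf hm in
theorem VeqVt (hode : ∀ v ∈ Set.Icc v₁ v₂, deriv m v + m v - deriv f v = 0) :
    ∀ x ∈ SigmaR v₁ v₂,
      m (vR x) * (x.1 - vR x) + f (vR x) = Vt f m v₁ x := by
  intro x hx
  have h1 : vR x = x.1 + 1 - |x.2| := rfl
  have h2 : x.1 - vR x = |x.2| - 1 := by rw [h1]; ring
  rw [Vt, ← h1, h2, F_eq hf hm hode _ hx.2]

include hf hm in
theorem partA (hode : ∀ v ∈ Set.Icc v₁ v₂, deriv m v + m v - deriv f v = 0) :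
    ContDiffOn ℝ 1 (fun x : ℝ × ℝ => m (vR x) * (x.1 - vR x) + f (vR x)) (SigmaR v₁ v₂) :=
  ((hVt1 hm).contDiffOn).congr (VeqVt hf hm hode)

theorem rho_mono (x : ℝ × ℝ) {a b : ℝ} (hab : a ≤ b) :
    x.1 + a + 1 - |x.2 + a| ≤ x.1 + b + 1 - |x.2 + b| := by
  have h1 : |x.2 + b| - |x.2 + a| ≤ |(x.2 + b) - (x.2 + a)| := abs_sub_abs_le_abs_sub _ _
  have h2 : |(x.2 + b) - (x.2 + a)| = b - a := by
    rw [show (x.2 + b) - (x.2 + a) = b - a by ring]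
    exact abs_of_nonneg (by linarith)
  linarith

include hm in
theorem lineHasDeriv (x : ℝ × ℝ) (β t : ℝ) :
    HasDerivAt (fun t => Vt f m v₁ (x.1 + β*t, x.2 + t))
      (β*(deriv m (x.1 + β*t + 1 - |x.2 + t|) * |x.2 + t| + m (x.1 + β*t + 1 - |x.2 + t|))
        - deriv m (x.1 + β*t + 1 - |x.2 + t|) * (x.2 + t)) t := by
  have hl : HasDerivAt (fun t : ℝ => ((x.1 + β*t, x.2 + t) : ℝ × ℝ)) (β, 1) t := by
    have := HasDerivAt.prodMk (((hasDerivAt_id t).const_mul β).const_add x.1)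
      ((hasDerivAt_id t).const_add x.2)
    simpa using this
  have := (hVtL (f := f) (v₁ := v₁) hm (x.1 + β*t, x.2 + t)).comp_hasDerivAt t hl
  refine this.congr_deriv ?_
  simp [L, ContinuousLinearMap.add_apply, ContinuousLinearMap.smul_apply]
  ring

include hm in
theorem partB1core (hcc : ∀ v ∈ Set.Icc v₁ v₂, deriv (deriv m) v ≤ 0)
    (x : ℝ × ℝ) (_hx : x ∈ SigmaR v₁ v₂) :
    ConcaveOn ℝ {t : ℝ | (x.1 + 1*t, x.2 + t) ∈ SigmaR v₁ v₂}
      (fun t => Vt f m v₁ (x.1 + 1*t, x.2 + t)) := by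
  set S := {t : ℝ | (x.1 + 1*t, x.2 + t) ∈ SigmaR v₁ v₂} with hS
  set ρ : ℝ → ℝ := fun t => x.1 + t + 1 - |x.2 + t| with hρdef
  have hmemS : ∀ t, t ∈ S ↔ |x.2 + t| ≤ 1 ∧ v₁ ≤ ρ t ∧ ρ t ≤ v₂ := by
    intro t
    simp only [hS, mem_setOf_eq, SigmaR, SigmaSet, vR, mem_Icc, one_mul, hρdef]
  have hmono : ∀ a b : ℝ, a ≤ b → ρ a ≤ ρ b := fun a b hab => rho_mono x hab
  set h : ℝ → ℝ := fun t =>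
    (deriv m (ρ t) * |x.2 + t| + m (ρ t)) - deriv m (ρ t) * (x.2 + t) with hhdef
  have hgt : ∀ t, HasDerivAt (fun t => Vt f m v₁ (x.1 + 1*t, x.2 + t)) (h t) t := by
    intro t
    have := lineHasDeriv (f := f) (v₁ := v₁) hm x 1 t
    simp only [one_mul] at this ⊢
    convert this using 1
  have hconv : Convex ℝ S := by
    rw [convex_iff_ordConnected, Set.ordConnected_iff]
    intro a ha b hb hab c hc
    obtain ⟨ha1, ha2, ha3⟩ := (hmemS a).1 ha
    obtain ⟨hb1, hb2, hb3⟩ := (hmemS b).1 hb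
    refine (hmemS c).2 ⟨?_, le_trans ha2 (hmono a c hc.1), le_trans (hmono c b hc.2) hb3⟩
    rw [abs_le] at ha1 hb1 ⊢
    constructor <;> [linarith [hc.1, ha1.1]; linarith [hc.2, hb1.2]]
  have hconst : ∀ t, -x.2 ≤ t → h t = m (x.1 + 1 - x.2) := by
    intro t ht
    have hs : (0:ℝ) ≤ x.2 + t := by linarith
    have habs : |x.2 + t| = x.2 + t := abs_of_nonneg hs
    have hρt : ρ t = x.1 + 1 - x.2 := by simp only [hρdef, habs]; ring
    simp only [hhdef, habs, hρt]; ring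
  set φ : ℝ → ℝ := fun t =>
    m (x.1 + 1 + x.2 + 2*t) - 2*(deriv m (x.1 + 1 + x.2 + 2*t))*(x.2 + t) with hφdef
  have hφd : ∀ t, HasDerivAt φ (-4 * deriv (deriv m) (x.1 + 1 + x.2 + 2*t) * (x.2 + t)) t := by
    intro t
    have hw : HasDerivAt (fun t : ℝ => x.1 + 1 + x.2 + 2*t) 2 t := by
      simpa using ((hasDerivAt_id t).const_mul 2).const_add (x.1 + 1 + x.2)
    have h1 : HasDerivAt (fun t : ℝ => m (x.1 + 1 + x.2 + 2*t))
        (deriv m (x.1 + 1 + x.2 + 2*t) * 2) t := ((m1 hm _).hasDerivAt.comp t hw)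
    have h2 : HasDerivAt (fun t : ℝ => deriv m (x.1 + 1 + x.2 + 2*t))
        (deriv (deriv m) (x.1 + 1 + x.2 + 2*t) * 2) t := ((dm1 hm _).hasDerivAt.comp t hw)
    have h3 : HasDerivAt (fun t : ℝ => x.2 + t) 1 t := (hasDerivAt_id t).const_add x.2
    have h4 := (h2.const_mul 2).mul h3
    have h5 := h1.sub h4
    refine h5.congr_deriv ?_
    ring
  have hφeq : ∀ t, x.2 + t ≤ 0 → h t = φ t := by
    intro t ht
    have habs : |x.2 + t| = -(x.2 + t) := abs_of_nonpos ht
    have hρt : ρ t = x.1 + 1 + x.2 + 2*t := by simp only [hρdef, habs]; ring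
    simp only [hhdef, hφdef, habs, hρt]; ring
  have hφdiff : Differentiable ℝ φ := fun t => (hφd t).differentiableAt
  have hkey : ∀ t1 t2 : ℝ, t1 ≤ t2 → x.2 + t2 ≤ 0 → v₁ ≤ ρ t1 → ρ t2 ≤ v₂ → h t2 ≤ h t1 := by
    intro t1 t2 h12 hs2 hv1 hv2
    have hanti : AntitoneOn φ (Set.Icc t1 t2) := by
      apply antitoneOn_of_deriv_nonpos (convex_Icc _ _) hφdiff.continuous.continuousOn
        hφdiff.differentiableOn
      intro τ hτ
      rw [interior_Icc] at hτ
      rw [(hφd τ).deriv]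
      have hsτ : x.2 + τ ≤ 0 := by linarith [hτ.2]
      have hρτ : ρ τ = x.1 + 1 + x.2 + 2*τ := by
        simp only [hρdef, abs_of_nonpos hsτ]; ring
      have hvτ : x.1 + 1 + x.2 + 2*τ ∈ Set.Icc v₁ v₂ := by
        rw [← hρτ]
        exact ⟨le_trans hv1 (hmono t1 τ hτ.1.le), le_trans (hmono τ t2 hτ.2.le) hv2⟩
      have hm2 := hcc _ hvτ
      nlinarith [hm2, hsτ]
    calc h t2 = φ t2 := hφeq t2 hs2
      _ ≤ φ t1 := hanti (Set.left_mem_Icc.2 h12) (Set.right_mem_Icc.2 h12) h12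
      _ = h t1 := (hφeq t1 (by linarith)).symm
  have hantiS : AntitoneOn h S := by
    intro t1 h1 t2 h2 h12
    obtain ⟨hb1, hb2, hb3⟩ := (hmemS t1).1 h1
    obtain ⟨hc1, hc2, hc3⟩ := (hmemS t2).1 h2
    by_cases hcase : -x.2 ≤ t1
    · rw [hconst t1 hcase, hconst t2 (le_trans hcase h12)]
    · push_neg at hcase
      by_cases hcase2 : x.2 + t2 ≤ 0
      · exact hkey t1 t2 h12 hcase2 hb2 hc3
      · push_neg at hcase2
        have e1 : h t2 = m (x.1 + 1 - x.2) := hconst t2 (by linarith)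
        have e2 : h (-x.2) = m (x.1 + 1 - x.2) := hconst (-x.2) le_rfl
        have hρstar : ρ (-x.2) ≤ v₂ := by
          have hρt2 : ρ t2 = x.1 + 1 - x.2 := by
            simp only [hρdef, abs_of_pos hcase2]; ring
          have hρs : ρ (-x.2) = x.1 + 1 - x.2 := by
            simp only [hρdef, show x.2 + -x.2 = (0:ℝ) by ring, abs_zero]; ring
          rw [hρs, ← hρt2]; exact hc3
        have hk := hkey t1 (-x.2) (by linarith) (by linarith) hb2 hρstar
        rw [e2] at hk; rw [e1]; exact hk
  have hdiffAll : Differentiable ℝ (fun t => Vt f m v₁ (x.1 + 1*t, x.2 + t)) :=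
    fun t => (hgt t).differentiableAt
  refine AntitoneOn.concaveOn_of_deriv hconv hdiffAll.continuous.continuousOn
    hdiffAll.differentiableOn ?_
  have hde : deriv (fun t => Vt f m v₁ (x.1 + 1*t, x.2 + t)) = h := funext fun t => (hgt t).deriv
  rw [hde]
  exact hantiS.mono interior_subset

theorem dC (P Q : ℝ → ℝ) (hP : Differentiable ℝ P) (hQ : Differentiable ℝ Q) (c u : ℝ) :
    HasDerivAt (fun u : ℝ => P (u + 1 - c) * (c - 1) + Q (u + 1 - c))
      (deriv P (u + 1 - c) * (c - 1) + deriv Q (u + 1 - c)) u := by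
  have hw : HasDerivAt (fun u : ℝ => u + 1 - c) 1 u := ((hasDerivAt_id u).add_const 1).sub_const c
  have h1 := ((hP _).hasDerivAt.comp u hw).mul_const (c - 1)
  have h2 := (hQ _).hasDerivAt.comp u hw
  have h3 := h1.add h2
  refine h3.congr_deriv ?_
  ring

theorem dD (P Q : ℝ → ℝ) (hP : Differentiable ℝ P) (hQ : Differentiable ℝ Q) (a ε s : ℝ) :
    HasDerivAt (fun s : ℝ => P (a - ε*s) * (ε*s - 1) + Q (a - ε*s))
      (-(ε * deriv P (a - ε*s)) * (ε*s - 1) + P (a - ε*s) * ε - ε * deriv Q (a - ε*s)) s := by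
  have hw : HasDerivAt (fun s : ℝ => a - ε*s) (-ε) s := by
    simpa using ((hasDerivAt_id s).const_mul ε).const_sub a
  have hlin : HasDerivAt (fun s : ℝ => ε*s - 1) ε s := by
    simpa using ((hasDerivAt_id s).const_mul ε).sub_const 1
  have h1 := ((hP _).hasDerivAt.comp s hw).mul hlin
  have h2 := (hQ _).hasDerivAt.comp s hw
  have h3 := h1.add h2
  refine h3.congr_deriv ?_
  simp only [Function.comp]
  ring

theorem dE (P Q R : ℝ → ℝ) (hP : Differentiable ℝ P) (hQ : Differentiable ℝ Q)
    (hR : Differentiable ℝ R) (a ε s : ℝ) :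
    HasDerivAt (fun s : ℝ => -(ε * P (a - ε*s)) * (ε*s - 1) + Q (a - ε*s) * ε - ε * R (a - ε*s))
      (ε*ε*(deriv P (a - ε*s) * (ε*s - 1) - P (a - ε*s) - deriv Q (a - ε*s)
        + deriv R (a - ε*s))) s := by
  have hw : HasDerivAt (fun s : ℝ => a - ε*s) (-ε) s := by
    simpa using ((hasDerivAt_id s).const_mul ε).const_sub a
  have hlin : HasDerivAt (fun s : ℝ => ε*s - 1) ε s := by
    simpa using ((hasDerivAt_id s).const_mul ε).sub_const 1
  have h1 := ((((hP _).hasDerivAt.comp s hw).const_mul ε).neg).mul hlin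
  have h2 := ((hQ _).hasDerivAt.comp s hw).mul_const ε
  have h3 := ((hR _).hasDerivAt.comp s hw).const_mul ε
  have h4 := (h1.add h2).sub h3
  refine h4.congr_deriv ?_
  simp only [Function.comp, Pi.neg_apply]
  ring

include hf in
theorem f1 : Differentiable ℝ f := hf.differentiable (by norm_num)

include hf in
theorem df1 : Differentiable ℝ (deriv f) := by
  have h2 : ContDiff ℝ (1+1) f := by norm_num at hf ⊢; exact hf
  exact (contDiff_succ_iff_deriv.mp h2).2.2.differentiable (by norm_num)

include hf hm in
theorem partC (x : ℝ × ℝ) (ε : ℝ) (hε : ε = 1 ∨ ε = -1) (hsgn : 0 < ε * x.2) :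
    SolvesStrangeEq (fun x : ℝ × ℝ => m (vR x) * (x.1 - vR x) + f (vR x)) x := by
  have hm1 := m1 hm
  have hdm1 := dm1 hm
  have hf1 := f1 hf
  have hdf1 := df1 hf
  have habsgen : ∀ u : ℝ, 0 < ε * u → |u| = ε * u := by
    intro u hu
    rcases hε with h | h <;> subst h
    · rw [one_mul] at hu ⊢; exact abs_of_pos hu
    · rw [neg_one_mul] at hu ⊢; rw [abs_of_neg (by linarith)]
  have habs : |x.2| = ε * x.2 := habsgen _ hsgn
  set VV : ℝ × ℝ → ℝ := fun x => m (vR x) * (x.1 - vR x) + f (vR x) with hVV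
  -- p11
  have hfun : ∀ c : ℝ, (fun u => VV (u, c))
      = fun u => m (u + 1 - |c|) * (|c| - 1) + f (u + 1 - |c|) := by
    intro c; funext u
    show m (vR (u, c)) * (u - vR (u, c)) + f (vR (u, c)) = _
    have hv : vR (u, c) = u + 1 - |c| := rfl
    rw [hv, show u - (u + 1 - |c|) = |c| - 1 from by ring]
  have hp11 : p11 VV x = deriv (deriv m) (x.1 + 1 - ε*x.2) * (ε*x.2 - 1)
      + deriv (deriv f) (x.1 + 1 - ε*x.2) := by
    have hinner : (fun s => deriv (fun u => VV (u, x.2)) s)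
        = fun s => deriv m (s + 1 - |x.2|) * (|x.2| - 1) + deriv f (s + 1 - |x.2|) := by
      funext s; rw [hfun x.2]; exact (dC m f hm1 hf1 |x.2| s).deriv
    rw [p11, hinner, (dC (deriv m) (deriv f) hdm1 hdf1 |x.2| x.1).deriv, habs]
  -- eventual sign facts
  have hop : ∀ᶠ s in nhds x.2, 0 < ε * s :=
    (isOpen_lt continuous_const (continuous_const.mul continuous_id)).eventually_mem hsgn
  -- p22
  have hψ : ∀ᶠ s in nhds x.2, deriv (fun u => VV (x.1, u)) s
      = -(ε * deriv m (x.1 + 1 - ε*s)) * (ε*s - 1) + m (x.1 + 1 - ε*s) * ε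
        - ε * deriv f (x.1 + 1 - ε*s) := by
    refine hop.mono fun s hs => ?_
    have hev2 : ∀ᶠ u in nhds s, 0 < ε * u :=
      (isOpen_lt continuous_const (continuous_const.mul continuous_id)).eventually_mem hs
    have hVeq : (fun u => VV (x.1, u)) =ᶠ[nhds s]
        fun u => m (x.1 + 1 - ε*u) * (ε*u - 1) + f (x.1 + 1 - ε*u) := by
      refine hev2.mono fun u hu => ?_
      have habsu : |u| = ε * u := habsgen _ hu
      show m (vR (x.1, u)) * (x.1 - vR (x.1, u)) + f (vR (x.1, u)) = _
      have hv : vR (x.1, u) = x.1 + 1 - ε*u := by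
        show x.1 + 1 - |u| = _; rw [habsu]
      rw [hv, show x.1 - (x.1 + 1 - ε*u) = ε*u - 1 from by ring]
    rw [hVeq.deriv_eq, (dD m f hm1 hf1 (x.1+1) ε s).deriv]
  have hp22 : p22 VV x = ε*ε*(deriv (deriv m) (x.1 + 1 - ε*x.2) * (ε*x.2 - 1)
      - deriv m (x.1 + 1 - ε*x.2) - deriv m (x.1 + 1 - ε*x.2)
      + deriv (deriv f) (x.1 + 1 - ε*x.2)) := by
    rw [p22, Filter.EventuallyEq.deriv_eq hψ,
      (dE (deriv m) m (deriv f) hdm1 hm1 hdf1 (x.1+1) ε x.2).deriv]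
  -- p12
  have hCfun : (fun s => deriv (fun u => VV (u, s)) x.1)
      = fun s => deriv m (x.1 + 1 - |s|) * (|s| - 1) + deriv f (x.1 + 1 - |s|) := by
    funext s; rw [hfun s]; exact (dC m f hm1 hf1 |s| x.1).deriv
  have hχ : (fun s => deriv m (x.1 + 1 - |s|) * (|s| - 1) + deriv f (x.1 + 1 - |s|))
      =ᶠ[nhds x.2] fun s => deriv m (x.1 + 1 - ε*s) * (ε*s - 1) + deriv f (x.1 + 1 - ε*s) := by
    refine hop.mono fun s hs => ?_
    simp only []
    rw [habsgen _ hs]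
  have hp12 : p12 VV x = -(ε * deriv (deriv m) (x.1 + 1 - ε*x.2)) * (ε*x.2 - 1)
      + deriv m (x.1 + 1 - ε*x.2) * ε - ε * deriv (deriv f) (x.1 + 1 - ε*x.2) := by
    rw [p12, hCfun, Filter.EventuallyEq.deriv_eq hχ,
      (dD (deriv m) (deriv f) hdm1 hdf1 (x.1+1) ε x.2).deriv]
  show (p11 VV x + p22 VV x)^2 = 4 * p12 VV x ^ 2
  rw [hp11, hp22, hp12]
  rcases hε with h | h <;> subst h <;> ring

include hf hm in
theorem partB1V (hode : ∀ v ∈ Set.Icc v₁ v₂, deriv m v + m v - deriv f v = 0)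
    (hcc : ∀ v ∈ Set.Icc v₁ v₂, deriv (deriv m) v ≤ 0) :
    ConcaveAlongDirOn (fun x : ℝ × ℝ => m (vR x) * (x.1 - vR x) + f (vR x)) 1
      (SigmaR v₁ v₂) := by
  intro x hx
  have hcore := partB1core (f := f) (v₁ := v₁) hm hcc x hx
  refine concaveOn_congr hcore ?_
  intro t ht
  exact (VeqVt hf hm hode _ ht).symm

include hf hm in
theorem partB2V (hode : ∀ v ∈ Set.Icc v₁ v₂, deriv m v + m v - deriv f v = 0)
    (hcc : ∀ v ∈ Set.Icc v₁ v₂, deriv (deriv m) v ≤ 0) :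
    ConcaveAlongDirOn (fun x : ℝ × ℝ => m (vR x) * (x.1 - vR x) + f (vR x)) (-1)
      (SigmaR v₁ v₂) := by
  have hsym : ∀ y : ℝ × ℝ, y ∈ SigmaR v₁ v₂ → ((y.1, -y.2) : ℝ × ℝ) ∈ SigmaR v₁ v₂ := by
    intro y hy
    refine ⟨?_, ?_⟩
    · show |(-(y.2))| ≤ 1; rw [abs_neg]; exact hy.1
    · have hv : vR (y.1, -y.2) = vR y := by
        show y.1 + 1 - |(-y.2)| = y.1 + 1 - |y.2|; rw [abs_neg]
      show vR (y.1, -y.2) ∈ Set.Icc v₁ v₂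
      rw [hv]; exact hy.2
  intro x hx
  have hx' : ((x.1, -x.2) : ℝ × ℝ) ∈ SigmaR v₁ v₂ := hsym x hx
  have K := partB1V hf hm hode hcc (x.1, -x.2) hx'
  have K2 := concaveOn_comp_neg K
  have hVe : ∀ a b : ℝ, m (vR (a, -b)) * (a - vR (a, -b)) + f (vR (a, -b))
      = m (vR (a, b)) * (a - vR (a, b)) + f (vR (a, b)) := by
    intro a b
    have : vR (a, -b) = vR (a, b) := by
      show a + 1 - |(-b)| = a + 1 - |b|; rw [abs_neg]
    rw [this]
  have hseteq : {t : ℝ | (x.1 + (-1) * t, x.2 + t) ∈ SigmaR v₁ v₂}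
      = {t : ℝ | -t ∈ {t : ℝ | ((x.1, -x.2).1 + 1 * t, (x.1, -x.2).2 + t) ∈ SigmaR v₁ v₂}} := by
    ext t
    simp only [mem_setOf_eq]
    have e : (((x.1, -x.2).1 + 1 * (-t), (x.1, -x.2).2 + (-t)) : ℝ × ℝ)
        = (x.1 + (-1) * t, -(x.2 + t)) := by
      show ((x.1 + 1 * (-t), -x.2 + (-t)) : ℝ × ℝ) = _
      rw [Prod.mk.injEq]
      constructor <;> ring
    rw [e]
    constructor
    · intro hmem
      exact hsym _ hmem
    · intro hmem
      have := hsym _ hmem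
      simpa using this
  rw [hseteq]
  refine concaveOn_congr K2 ?_
  intro t ht
  show m (vR ((x.1, -x.2).1 + 1 * (-t), (x.1, -x.2).2 + (-t)))
      * (((x.1, -x.2).1 + 1 * (-t)) - vR ((x.1, -x.2).1 + 1 * (-t), (x.1, -x.2).2 + (-t)))
      + f (vR ((x.1, -x.2).1 + 1 * (-t), (x.1, -x.2).2 + (-t))) = _
  have e1 : (x.1, -x.2).1 + 1 * (-t) = x.1 + (-1) * t := by show x.1 + 1 * (-t) = _; ring
  have e2 : (x.1, -x.2).2 + (-t) = -(x.2 + t) := by show -x.2 + (-t) = _; ring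
  rw [e1, e2, hVe]

end Main
end St9

/-- right tangents / right horizontal herringbone. -/
theorem statement9 (f m : ℝ → ℝ) (v₁ v₂ : ℝ) (hv : v₁ < v₂)
    (hf : ContDiff ℝ 2 f) (hm : ContDiff ℝ 2 m)
    (hode : ∀ v ∈ Set.Icc v₁ v₂, deriv m v + m v - deriv f v = 0)
    (hcc : ∀ v ∈ Set.Icc v₁ v₂, deriv (deriv m) v ≤ 0) :
    ContDiffOn ℝ 1 (fun x : ℝ × ℝ => m (vR x) * (x.1 - vR x) + f (vR x))
      (SigmaR v₁ v₂) ∧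
    DiagConcaveOn (fun x : ℝ × ℝ => m (vR x) * (x.1 - vR x) + f (vR x))
      (SigmaR v₁ v₂) ∧
    ∀ x ∈ interior (SigmaR v₁ v₂), x.2 ≠ 0 →
      SolvesStrangeEq (fun x : ℝ × ℝ => m (vR x) * (x.1 - vR x) + f (vR x)) x := by
  refine ⟨St9.partA hf hm hode, ⟨St9.partB1V hf hm hode hcc, St9.partB2V hf hm hode hcc⟩, ?_⟩
  intro x _ hx2
  rcases lt_or_gt_of_ne hx2 with h | h
  · exact St9.partC hf hm x (-1) (Or.inr rfl) (by rw [neg_one_mul]; linarith)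
  · exact St9.partC hf hm x 1 (Or.inl rfl) (by rw [one_mul]; exact h)

end
end

section
/- Let f : ℝ → ℝ be twice continuously differentiable, let v₁ < v₂, and let m be a twice continuously differentiable function on [v₁, v₂] satisfying the differential equation −m'(v) + m(v) − f'(v) = 0 and the inequality m''(v) ≥ 0 for all v ∈ [v₁, v₂]. Define v_L(x) = x₁ − 1 + |x₂| and V(x) = m(v_L(x))·(x₁ − v_L(x)) + f(v_L(x)) on Σ_L(v₁,v₂) = {x ∈ Σ : v_L(x) ∈ [v₁, v₂]}. Then V is C¹-smooth and diagonally concave on Σ_L(v₁,v₂), and at every interior point with x₂ ≠ 0 it satisfies (∂²V/∂x₁² + ∂²V/∂x₂²)² = 4(∂²V/∂x₁∂x₂)². -/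
open MeasureTheory Set

noncomputable section

namespace St10

def fstL : ℝ × ℝ →L[ℝ] ℝ := ContinuousLinearMap.fst ℝ ℝ ℝ
def sndL : ℝ × ℝ →L[ℝ] ℝ := ContinuousLinearMap.snd ℝ ℝ ℝ

/-- The function `V`. -/
def Vf (m f : ℝ → ℝ) : ℝ × ℝ → ℝ := fun x => m (vL x) * (x.1 - vL x) + f (vL x)

/-- The candidate derivative of `V`. -/
def Dmap (m : ℝ → ℝ) (x : ℝ × ℝ) : ℝ × ℝ →L[ℝ] ℝ :=
  (m (vL x) - |x.2| * deriv m (vL x)) • fstL + (-(x.2 * deriv m (vL x))) • sndL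

lemma Dmap_apply (m : ℝ → ℝ) (x : ℝ × ℝ) (p : ℝ × ℝ) :
    Dmap m x p = (m (vL x) - |x.2| * deriv m (vL x)) * p.1 + (-(x.2 * deriv m (vL x))) * p.2 := by
  simp [Dmap, fstL, sndL]

lemma hasFDerivAt_W (f m : ℝ → ℝ) (hf : ContDiff ℝ 2 f) (hm : ContDiff ℝ 2 m) (σ : ℝ)
    (y : ℝ × ℝ) :
    HasFDerivAt (fun y : ℝ × ℝ => m (y.1 - 1 + σ * y.2) * (1 - σ * y.2) + f (y.1 - 1 + σ * y.2))
      ((deriv m (y.1 - 1 + σ * y.2) * (1 - σ * y.2) + deriv f (y.1 - 1 + σ * y.2)) • fstL +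
        (σ * (deriv m (y.1 - 1 + σ * y.2) * (1 - σ * y.2) - m (y.1 - 1 + σ * y.2)
          + deriv f (y.1 - 1 + σ * y.2))) • sndL) y := by
  have hmd : Differentiable ℝ m := hm.differentiable (by norm_num)
  have hfd : Differentiable ℝ f := hf.differentiable (by norm_num)
  set v := y.1 - 1 + σ * y.2 with hv
  have hu : HasFDerivAt (fun y : ℝ × ℝ => y.1 - 1 + σ * y.2) (fstL + σ • sndL) y := by
    have h1 : HasFDerivAt (fun y : ℝ × ℝ => y.1) fstL y := hasFDerivAt_fst
    have h2 : HasFDerivAt (fun y : ℝ × ℝ => σ * y.2) (σ • sndL) y :=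
      (hasFDerivAt_snd (p := y)).const_mul σ
    exact (h1.sub_const 1).add h2
  have hmu : HasFDerivAt (fun y : ℝ × ℝ => m (y.1 - 1 + σ * y.2))
      (deriv m v • (fstL + σ • sndL)) y :=
    HasDerivAt.comp_hasFDerivAt y (hmd v).hasDerivAt hu
  have hfu : HasFDerivAt (fun y : ℝ × ℝ => f (y.1 - 1 + σ * y.2))
      (deriv f v • (fstL + σ • sndL)) y :=
    HasDerivAt.comp_hasFDerivAt y (hfd v).hasDerivAt hu
  have hlin : HasFDerivAt (fun y : ℝ × ℝ => 1 - σ * y.2) ((0 : ℝ × ℝ →L[ℝ] ℝ) - σ • sndL) y :=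
    (hasFDerivAt_const (1:ℝ) y).sub ((hasFDerivAt_snd (p := y)).const_mul σ)
  have H := (hmu.mul hlin).add hfu
  have hEq : (deriv m v * (1 - σ * y.2) + deriv f v) • fstL +
        (σ * (deriv m v * (1 - σ * y.2) - m v + deriv f v)) • sndL
      = m (y.1 - 1 + σ * y.2) • ((0 : ℝ × ℝ →L[ℝ] ℝ) - σ • sndL) +
        (1 - σ * y.2) • deriv m v • (fstL + σ • sndL) + deriv f v • (fstL + σ • sndL) := by
    refine ContinuousLinearMap.ext fun p => ?_
    simp [fstL, sndL, ← hv]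
    ring
  exact hEq ▸ H

lemma abs_eventually_pos {x : ℝ × ℝ} (h : 0 < x.2) :
    ∀ᶠ y : ℝ × ℝ in nhds x, 0 < y.2 :=
  (isOpen_lt continuous_const continuous_snd).mem_nhds h

lemma abs_eventually_neg {x : ℝ × ℝ} (h : x.2 < 0) :
    ∀ᶠ y : ℝ × ℝ in nhds x, y.2 < 0 :=
  (isOpen_lt continuous_snd continuous_const).mem_nhds h

lemma hasFDerivAt_Vf (f m : ℝ → ℝ) (hf : ContDiff ℝ 2 f) (hm : ContDiff ℝ 2 m) {v₁ v₂ : ℝ}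
    (hode : ∀ v ∈ Set.Icc v₁ v₂, -deriv m v + m v - deriv f v = 0)
    {x : ℝ × ℝ} (hx : vL x ∈ Set.Icc v₁ v₂) :
    HasFDerivAt (Vf m f) (Dmap m x) x := by
  have hODE := hode _ hx
  have hfv : deriv f (vL x) = m (vL x) - deriv m (vL x) := by linarith
  rcases lt_trichotomy x.2 0 with h2 | h2 | h2
  · -- x.2 < 0, use σ = -1
    have hW := hasFDerivAt_W f m hf hm (-1) x
    have hvx : vL x = x.1 - 1 + (-1) * x.2 := by
      simp only [vL, abs_of_neg h2]; ring
    have hEq : (deriv m (x.1 - 1 + (-1) * x.2) * (1 - (-1) * x.2) +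
          deriv f (x.1 - 1 + (-1) * x.2)) • fstL +
        ((-1) * (deriv m (x.1 - 1 + (-1) * x.2) * (1 - (-1) * x.2) - m (x.1 - 1 + (-1) * x.2)
          + deriv f (x.1 - 1 + (-1) * x.2))) • sndL = Dmap m x := by
      refine ContinuousLinearMap.ext fun p => ?_
      rw [← hvx]
      simp only [Dmap_apply, ContinuousLinearMap.add_apply, ContinuousLinearMap.smul_apply,
        smul_eq_mul]
      rw [hfv, abs_of_neg h2]
      simp only [fstL, sndL, ContinuousLinearMap.coe_fst', ContinuousLinearMap.coe_snd']
      ring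
    rw [hEq] at hW
    refine hW.congr_of_eventuallyEq ?_
    filter_upwards [abs_eventually_neg h2] with y hy
    simp only [Vf, vL, abs_of_neg hy]
    ring_nf
  · -- x.2 = 0 : the delicate case
    have hW := hasFDerivAt_W f m hf hm 1 x
    have hvx : vL x = x.1 - 1 + 1 * x.2 := by simp [vL, h2]
    have hEq : (deriv m (x.1 - 1 + 1 * x.2) * (1 - 1 * x.2) +
          deriv f (x.1 - 1 + 1 * x.2)) • fstL +
        (1 * (deriv m (x.1 - 1 + 1 * x.2) * (1 - 1 * x.2) - m (x.1 - 1 + 1 * x.2)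
          + deriv f (x.1 - 1 + 1 * x.2))) • sndL = Dmap m x := by
      refine ContinuousLinearMap.ext fun p => ?_
      rw [← hvx]
      simp only [Dmap_apply, ContinuousLinearMap.add_apply, ContinuousLinearMap.smul_apply,
        smul_eq_mul]
      rw [hfv, h2]
      simp only [fstL, sndL, ContinuousLinearMap.coe_fst', ContinuousLinearMap.coe_snd']
      ring_nf
    rw [hEq] at hW
    -- now transfer along T : y ↦ (y.1, |y.2|)
    rw [hasFDerivAt_iff_isLittleO] at hW ⊢
    set T : ℝ × ℝ → ℝ × ℝ := fun y => (y.1, |y.2|) with hT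
    have hTx : T x = x := by
      rw [hT]; exact Prod.ext rfl (by simp [h2])
    have hTc : Filter.Tendsto T (nhds x) (nhds x) := by
      have : Continuous T := continuous_fst.prodMk continuous_snd.abs
      simpa [hTx] using this.tendsto x
    have h1 := hW.comp_tendsto hTc
    have h2' : (fun y : ℝ × ℝ => Vf m f y - Vf m f x - (Dmap m x) (y - x))
        =o[nhds x] fun y => T y - x := by
      refine h1.congr (fun y => ?_) (fun y => rfl)
      have e1 : m ((T y).1 - 1 + 1 * (T y).2) * (1 - 1 * (T y).2) + f ((T y).1 - 1 + 1 * (T y).2)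
          = Vf m f y := by
        simp only [hT, Vf, vL, one_mul]
        ring_nf
      have e2 : m (x.1 - 1 + 1 * x.2) * (1 - 1 * x.2) + f (x.1 - 1 + 1 * x.2) = Vf m f x := by
        simp only [Vf, vL, h2, one_mul, abs_zero]
        ring_nf
      have e3 : (Dmap m x) (T y - x) = (Dmap m x) (y - x) := by
        rw [Dmap_apply, Dmap_apply]
        simp [hT, h2]
      show _ - _ - _ = _
      rw [e1, e2, e3]
    have h3 : (fun y : ℝ × ℝ => T y - x) =O[nhds x] fun y => y - x := by
      refine Asymptotics.isBigO_of_le _ fun y => ?_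
      have : ‖T y - x‖ = ‖y - x‖ := by
        rw [hT]
        simp only [Prod.norm_def, Prod.fst_sub, Prod.snd_sub, Real.norm_eq_abs, h2, sub_zero,
          abs_abs]
      exact this.le
    exact h2'.trans_isBigO h3
  · -- 0 < x.2, use σ = 1
    have hW := hasFDerivAt_W f m hf hm 1 x
    have hvx : vL x = x.1 - 1 + 1 * x.2 := by
      simp only [vL, abs_of_pos h2]; ring
    have hEq : (deriv m (x.1 - 1 + 1 * x.2) * (1 - 1 * x.2) +
          deriv f (x.1 - 1 + 1 * x.2)) • fstL +
        (1 * (deriv m (x.1 - 1 + 1 * x.2) * (1 - 1 * x.2) - m (x.1 - 1 + 1 * x.2)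
          + deriv f (x.1 - 1 + 1 * x.2))) • sndL = Dmap m x := by
      refine ContinuousLinearMap.ext fun p => ?_
      rw [← hvx]
      simp only [Dmap_apply, ContinuousLinearMap.add_apply, ContinuousLinearMap.smul_apply,
        smul_eq_mul]
      rw [hfv, abs_of_pos h2]
      simp only [fstL, sndL, ContinuousLinearMap.coe_fst', ContinuousLinearMap.coe_snd']
      ring
    rw [hEq] at hW
    refine hW.congr_of_eventuallyEq ?_
    filter_upwards [abs_eventually_pos h2] with y hy
    simp only [Vf, vL, abs_of_pos hy]
    ring_nf

lemma continuous_vL : Continuous vL := by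
  have : Continuous fun x : ℝ × ℝ => x.1 - 1 + |x.2| :=
    (continuous_fst.sub continuous_const).add continuous_snd.abs
  exact this

lemma continuous_Vf (f m : ℝ → ℝ) (hf : ContDiff ℝ 2 f) (hm : ContDiff ℝ 2 m) :
    Continuous (Vf m f) :=
  ((hm.continuous.comp continuous_vL).mul (continuous_fst.sub continuous_vL)).add
    (hf.continuous.comp continuous_vL)

lemma continuous_Dmap (m : ℝ → ℝ) (hm : ContDiff ℝ 2 m) : Continuous (Dmap m) := by
  have hmc : Continuous m := hm.continuous
  have hmc' : Continuous (deriv m) := hm.continuous_deriv one_le_two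
  unfold Dmap
  exact (((hmc.comp continuous_vL).sub
      (continuous_snd.abs.mul (hmc'.comp continuous_vL))).smul continuous_const).add
    (((continuous_snd.mul (hmc'.comp continuous_vL)).neg).smul continuous_const)

lemma part1 (f m : ℝ → ℝ) (hf : ContDiff ℝ 2 f) (hm : ContDiff ℝ 2 m) {v₁ v₂ : ℝ}
    (hode : ∀ v ∈ Set.Icc v₁ v₂, -deriv m v + m v - deriv f v = 0) :
    ContDiffOn ℝ 1 (Vf m f) (SigmaL v₁ v₂) := by
  rw [show (1 : WithTop ℕ∞) = 0 + 1 from rfl,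
    contDiffOn_succ_iff_hasFDerivWithinAt (by simp)]
  intro x hx
  refine ⟨SigmaL v₁ v₂, ?_, ?_, Dmap m, fun y hy => ?_, ?_⟩
  · rw [Set.insert_eq_of_mem hx]
    exact self_mem_nhdsWithin
  · simp
  · exact (hasFDerivAt_Vf f m hf hm hode hy.2).hasFDerivWithinAt
  · rw [contDiffOn_zero]
    exact (continuous_Dmap m hm).continuousOn

lemma deriv_contDiff_one (m : ℝ → ℝ) (hm : ContDiff ℝ 2 m) : ContDiff ℝ 1 (deriv m) := by
  have h2 : ContDiff ℝ ((1 : WithTop ℕ∞) + 1) m := by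
    rw [show ((1 : WithTop ℕ∞) + 1) = 2 by norm_num]
    exact hm
  exact (contDiff_succ_iff_deriv.mp h2).2.2

lemma part2main (f m : ℝ → ℝ) (hf : ContDiff ℝ 2 f) (hm : ContDiff ℝ 2 m) {v₁ v₂ : ℝ}
    (hode : ∀ v ∈ Set.Icc v₁ v₂, -deriv m v + m v - deriv f v = 0)
    (hcc : ∀ v ∈ Set.Icc v₁ v₂, 0 ≤ deriv (deriv m) v) :
    ConcaveAlongDirOn (Vf m f) 1 (SigmaL v₁ v₂) := by
  have hmd : Differentiable ℝ m := hm.differentiable (by norm_num)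
  have hm1 : ContDiff ℝ 1 (deriv m) := deriv_contDiff_one m hm
  have hmd' : Differentiable ℝ (deriv m) := hm1.differentiable one_ne_zero
  have hmc : Continuous m := hm.continuous
  have hmc' : Continuous (deriv m) := hm.continuous_deriv one_le_two
  intro x hx
  set T : Set ℝ := {t : ℝ | (x.1 + 1 * t, x.2 + t) ∈ SigmaL v₁ v₂} with hTdef
  have hTmem : ∀ t : ℝ, t ∈ T ↔ (|x.2 + t| ≤ 1 ∧ v₁ ≤ x.1 + t - 1 + |x.2 + t| ∧
      x.1 + t - 1 + |x.2 + t| ≤ v₂) := by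
    intro t
    constructor
    · rintro ⟨h1, h2⟩
      rw [Set.mem_Icc] at h2
      simp only [SigmaSet, Set.mem_setOf_eq] at h1
      simp only [vL, one_mul] at h2
      exact ⟨h1, by linarith [h2.1], by linarith [h2.2]⟩
    · rintro ⟨h1, h2, h3⟩
      refine ⟨h1, ?_⟩
      rw [Set.mem_Icc]
      simp only [vL, one_mul]
      constructor <;> linarith
  have hmono : ∀ {t₁ t₂ : ℝ}, t₁ ≤ t₂ →
      x.1 + t₁ - 1 + |x.2 + t₁| ≤ x.1 + t₂ - 1 + |x.2 + t₂| := by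
    intro t₁ t₂ h
    have h1 := abs_sub_abs_le_abs_sub (x.2 + t₁) (x.2 + t₂)
    have h2 : |x.2 + t₁ - (x.2 + t₂)| = t₂ - t₁ := by
      rw [show x.2 + t₁ - (x.2 + t₂) = -(t₂ - t₁) by ring, abs_neg, abs_of_nonneg (by linarith)]
    linarith
  have hTord : Set.OrdConnected T := by
    constructor
    intro t₁ h₁ t₂ h₂ t ht
    rw [hTmem] at h₁ h₂ ⊢
    have ha1 := abs_le.mp h₁.1
    have ha2 := abs_le.mp h₂.1
    refine ⟨abs_le.mpr ⟨by linarith [ht.1, ht.2], by linarith [ht.1, ht.2]⟩, ?_, ?_⟩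
    · linarith [h₁.2.1, hmono ht.1]
    · linarith [h₂.2.2, hmono ht.2]
  have hconv : Convex ℝ T := convex_iff_ordConnected.mpr hTord
  -- derivative of h along the line
  set P : ℝ → ℝ := fun t => m (x.1 + t - 1 + |x.2 + t|)
      - |x.2 + t| * deriv m (x.1 + t - 1 + |x.2 + t|)
      - (x.2 + t) * deriv m (x.1 + t - 1 + |x.2 + t|) with hP
  have hderiv : ∀ t ∈ T, HasDerivAt (fun t => Vf m f (x.1 + 1 * t, x.2 + t)) (P t) t := by
    intro t ht
    have hl : HasDerivAt (fun t : ℝ => ((x.1 + 1 * t, x.2 + t) : ℝ × ℝ)) ((1, 1) : ℝ × ℝ) t := by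
      have h1 : HasDerivAt (fun t : ℝ => x.1 + 1 * t) 1 t := by
        simpa using (((hasDerivAt_id t).const_mul (1:ℝ)).const_add x.1)
      have h2 : HasDerivAt (fun t : ℝ => x.2 + t) 1 t := by
        simpa using ((hasDerivAt_id t).const_add x.2)
      exact h1.prodMk h2
    have hvmem : vL (x.1 + 1 * t, x.2 + t) ∈ Set.Icc v₁ v₂ := ht.2
    have hF := (hasFDerivAt_Vf f m hf hm hode hvmem).comp_hasDerivAt t hl
    refine hF.congr_deriv ?_
    rw [Dmap_apply]
    simp only [vL, one_mul, hP]
    ring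
  -- the right-hand smooth branch
  set c : ℝ := x.1 + x.2 - 1 with hc
  set Q : ℝ → ℝ := fun t => m (c + 2 * t) - 2 * (x.2 + t) * deriv m (c + 2 * t) with hQdef
  have hQder : ∀ t : ℝ, HasDerivAt Q
      (-(4 * (x.2 + t) * deriv (deriv m) (c + 2 * t))
        + (2 * deriv m (c + 2 * t) - 2 * deriv m (c + 2 * t))) t := by
    intro t
    have he : HasDerivAt (fun t : ℝ => c + 2 * t) 2 t := by
      simpa using (((hasDerivAt_id t).const_mul (2:ℝ)).const_add c)
    have h1 : HasDerivAt (fun t => m (c + 2 * t)) (deriv m (c + 2 * t) * 2) t :=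
      ((hmd _).hasDerivAt).comp t he
    have h2 : HasDerivAt (fun t => deriv m (c + 2 * t)) (deriv (deriv m) (c + 2 * t) * 2) t :=
      ((hmd' _).hasDerivAt).comp t he
    have h3 : HasDerivAt (fun t : ℝ => 2 * (x.2 + t)) 2 t := by
      simpa using (((hasDerivAt_id t).const_add x.2).const_mul (2:ℝ))
    have H := h1.sub (h3.mul h2)
    refine H.congr_deriv ?_
    ring
  have hQcont : Continuous Q := by
    rw [hQdef]
    have hc1 : Continuous fun t : ℝ => c + 2 * t :=
      continuous_const.add (continuous_const.mul continuous_id)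
    exact (hmc.comp hc1).sub
      ((continuous_const.mul (continuous_const.add continuous_id)).mul (hmc'.comp hc1))
  have hQanti : AntitoneOn Q (T ∩ Set.Ici (-x.2)) := by
    apply antitoneOn_of_deriv_nonpos (hconv.inter (convex_Ici _)) hQcont.continuousOn
    · intro t ht
      exact (hQder t).differentiableAt.differentiableWithinAt
    · intro t ht
      have ht' : t ∈ T ∩ Set.Ici (-x.2) := interior_subset ht
      have hs : 0 ≤ x.2 + t := by
        have := ht'.2
        rw [Set.mem_Ici] at this
        linarith
      have habs : |x.2 + t| = x.2 + t := abs_of_nonneg hs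
      have hvt : c + 2 * t ∈ Set.Icc v₁ v₂ := by
        have hmem := (hTmem t).mp ht'.1
        rw [habs] at hmem
        rw [Set.mem_Icc]
        constructor <;> [linarith [hmem.2.1]; linarith [hmem.2.2]]
      rw [(hQder t).deriv]
      have hcc' := hcc _ hvt
      nlinarith
  -- relations between P and Q
  have hPQ : ∀ t : ℝ, 0 ≤ x.2 + t → P t = Q t := by
    intro t h
    have habs : |x.2 + t| = x.2 + t := abs_of_nonneg h
    have harg : x.1 + t - 1 + |x.2 + t| = c + 2 * t := by rw [habs, hc]; ring
    simp only [hP, hQdef]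
    rw [harg, habs]
    ring
  have hPc : ∀ t : ℝ, x.2 + t ≤ 0 → P t = m (x.1 - x.2 - 1) := by
    intro t h
    have habs : |x.2 + t| = -(x.2 + t) := abs_of_nonpos h
    have harg : x.1 + t - 1 + |x.2 + t| = x.1 - x.2 - 1 := by rw [habs]; ring
    simp only [hP]
    rw [harg, habs]
    ring
  have hQ0 : Q (-x.2) = m (x.1 - x.2 - 1) := by
    have harg : c + 2 * (-x.2) = x.1 - x.2 - 1 := by rw [hc]; ring
    simp only [hQdef]
    rw [harg, show x.2 + -x.2 = 0 by ring]
    ring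
  have hPanti : AntitoneOn P T := by
    intro t₁ h₁ t₂ h₂ h₁₂
    rcases le_or_gt (x.2 + t₂) 0 with hA | hA
    · rw [hPc t₂ hA, hPc t₁ (by linarith)]
    rcases le_or_gt 0 (x.2 + t₁) with hB | hB
    · rw [hPQ t₁ hB, hPQ t₂ hA.le]
      exact hQanti ⟨h₁, Set.mem_Ici.mpr (by linarith)⟩ ⟨h₂, Set.mem_Ici.mpr (by linarith)⟩ h₁₂
    · rw [hPc t₁ hB.le, hPQ t₂ hA.le, ← hQ0]
      have ht0 : -x.2 ∈ T := hTord.out h₁ h₂ ⟨by linarith, by linarith⟩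
      exact hQanti ⟨ht0, Set.mem_Ici.mpr le_rfl⟩ ⟨h₂, Set.mem_Ici.mpr (by linarith)⟩
        (by linarith)
  -- conclude
  refine AntitoneOn.concaveOn_of_deriv hconv ?_ ?_ ?_
  · exact ((continuous_Vf f m hf hm).comp
      ((continuous_const.add (continuous_const.mul continuous_id)).prodMk
        (continuous_const.add continuous_id))).continuousOn
  · intro t ht
    exact (hderiv t (interior_subset ht)).differentiableAt.differentiableWithinAt
  · intro t₁ h₁ t₂ h₂ h₁₂
    rw [(hderiv t₁ (interior_subset h₁)).deriv, (hderiv t₂ (interior_subset h₂)).deriv]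
    exact hPanti (interior_subset h₁) (interior_subset h₂) h₁₂

lemma reflect (G : ℝ × ℝ → ℝ) (hG : ∀ y : ℝ × ℝ, G (y.1, -y.2) = G y) {v₁ v₂ : ℝ}
    (h1 : ConcaveAlongDirOn G 1 (SigmaL v₁ v₂)) :
    ConcaveAlongDirOn G (-1) (SigmaL v₁ v₂) := by
  have hSsym : ∀ y : ℝ × ℝ, ((y.1, -y.2) : ℝ × ℝ) ∈ SigmaL v₁ v₂ ↔ y ∈ SigmaL v₁ v₂ := by
    intro y
    simp [SigmaL, SigmaSet, vL, abs_neg]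
  intro x hx
  have hx' : ((x.1, -x.2) : ℝ × ℝ) ∈ SigmaL v₁ v₂ := (hSsym x).mpr hx
  have h2 := h1 _ hx'
  set φ : ℝ →ᵃ[ℝ] ℝ := AffineMap.mk' (fun t => -t) (-(LinearMap.id)) 0
    (fun p => by simp) with hφdef
  have hφapp : ∀ t : ℝ, φ t = -t := fun t => by rw [hφdef, AffineMap.coe_mk']
  have h3 := h2.comp_affineMap φ
  have hset : {t : ℝ | ((x.1 + -1 * t, x.2 + t) : ℝ × ℝ) ∈ SigmaL v₁ v₂}
      = ⇑φ ⁻¹' {t : ℝ | (((x.1, -x.2) : ℝ × ℝ).1 + 1 * t, ((x.1, -x.2) : ℝ × ℝ).2 + t) ∈ SigmaL v₁ v₂} := by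
    ext t
    simp only [Set.mem_preimage, Set.mem_setOf_eq, hφapp]
    rw [show x.1 + 1 * (-t) = x.1 + -1 * t by ring, show -x.2 + -t = -(x.2 + t) by ring]
    exact (hSsym (x.1 + -1 * t, x.2 + t)).symm
  have hfun : (fun t : ℝ => G (x.1 + -1 * t, x.2 + t))
      = (fun t : ℝ => G (((x.1, -x.2) : ℝ × ℝ).1 + 1 * t, ((x.1, -x.2) : ℝ × ℝ).2 + t)) ∘ ⇑φ := by
    funext t
    simp only [Function.comp_apply, hφapp]
    rw [show x.1 + 1 * (-t) = x.1 + -1 * t by ring, show -x.2 + -t = -(x.2 + t) by ring]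
    exact (hG (x.1 + -1 * t, x.2 + t)).symm
  rw [hset, hfun]
  exact h3

lemma part2 (f m : ℝ → ℝ) (hf : ContDiff ℝ 2 f) (hm : ContDiff ℝ 2 m) {v₁ v₂ : ℝ}
    (hode : ∀ v ∈ Set.Icc v₁ v₂, -deriv m v + m v - deriv f v = 0)
    (hcc : ∀ v ∈ Set.Icc v₁ v₂, 0 ≤ deriv (deriv m) v) :
    DiagConcaveOn (Vf m f) (SigmaL v₁ v₂) := by
  have hmain := part2main f m hf hm hode hcc
  refine ⟨hmain, ?_⟩
  have hG : ∀ y : ℝ × ℝ, Vf m f (y.1, -y.2) = Vf m f y := by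
    intro y
    simp [Vf, vL, abs_neg]
  exact reflect (Vf m f) hG hmain

lemma L1 (g h : ℝ → ℝ) (hg : Differentiable ℝ g) (hh : Differentiable ℝ h) (a b u : ℝ) :
    HasDerivAt (fun u : ℝ => g (u + a) * b + h (u + a))
      (deriv g (u + a) * b + deriv h (u + a)) u := by
  have hu : HasDerivAt (fun u : ℝ => u + a) 1 u := (hasDerivAt_id u).add_const a
  have h1 := (((hg (u + a)).hasDerivAt).comp u hu).mul_const b
  have h2 := ((hh (u + a)).hasDerivAt).comp u hu
  exact (h1.add h2).congr_deriv (by ring)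

lemma L2a (g k : ℝ → ℝ) (hg : Differentiable ℝ g) (hk : Differentiable ℝ k) (a b σ s : ℝ) :
    HasDerivAt (fun s : ℝ => g (a + σ * s) * (b - σ * s) + k (a + σ * s))
      (σ * (deriv g (a + σ * s) * (b - σ * s) - g (a + σ * s) + deriv k (a + σ * s))) s := by
  have hu : HasDerivAt (fun s : ℝ => a + σ * s) σ s := by
    simpa using ((hasDerivAt_id s).const_mul σ).const_add a
  have hb : HasDerivAt (fun s : ℝ => b - σ * s) (-σ) s := by
    simpa using ((hasDerivAt_id s).const_mul σ).const_sub b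
  have h1 := (((hg _).hasDerivAt).comp s hu).mul hb
  have h2 := ((hk _).hasDerivAt).comp s hu
  exact (h1.add h2).congr_deriv (by simp only [Function.comp_apply]; ring)

lemma L2b (g h k : ℝ → ℝ) (hg : Differentiable ℝ g) (hh : Differentiable ℝ h)
    (hk : Differentiable ℝ k) (a b σ s : ℝ) :
    HasDerivAt (fun s : ℝ => g (a + σ * s) * (b - σ * s) - h (a + σ * s) + k (a + σ * s))
      (σ * (deriv g (a + σ * s) * (b - σ * s) - g (a + σ * s) - deriv h (a + σ * s)
        + deriv k (a + σ * s))) s := by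
  have hu : HasDerivAt (fun s : ℝ => a + σ * s) σ s := by
    simpa using ((hasDerivAt_id s).const_mul σ).const_add a
  have hb : HasDerivAt (fun s : ℝ => b - σ * s) (-σ) s := by
    simpa using ((hasDerivAt_id s).const_mul σ).const_sub b
  have h1 := (((hg _).hasDerivAt).comp s hu).mul hb
  have h2 := ((hh _).hasDerivAt).comp s hu
  have h3 := ((hk _).hasDerivAt).comp s hu
  exact ((h1.sub h2).add h3).congr_deriv (by simp only [Function.comp_apply]; ring)

lemma part3gen (f m : ℝ → ℝ) (hf : ContDiff ℝ 2 f) (hm : ContDiff ℝ 2 m) {v₁ v₂ : ℝ}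
    (hode : ∀ v ∈ Set.Icc v₁ v₂, -deriv m v + m v - deriv f v = 0)
    (σ : ℝ) (hσ : σ = 1 ∨ σ = -1) (x : ℝ × ℝ)
    (hev : ∀ᶠ s : ℝ in nhds x.2, |s| = σ * s)
    (hvmem : Set.Icc v₁ v₂ ∈ nhds (x.1 - 1 + σ * x.2)) :
    SolvesStrangeEq (Vf m f) x := by
  have hmd : Differentiable ℝ m := hm.differentiable (by norm_num)
  have hfd : Differentiable ℝ f := hf.differentiable (by norm_num)
  have hmd' : Differentiable ℝ (deriv m) := (deriv_contDiff_one m hm).differentiable one_ne_zero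
  have hfd' : Differentiable ℝ (deriv f) := (deriv_contDiff_one f hf).differentiable one_ne_zero
  set v : ℝ := x.1 - 1 + σ * x.2 with hv
  have habs : |x.2| = σ * x.2 := hev.self_of_nhds
  -- second derivative of f from the ODE
  have hf'' : deriv (deriv f) v = deriv m v - deriv (deriv m) v := by
    have hev0 : (fun w => -deriv m w + m w - deriv f w) =ᶠ[nhds v] fun _ => (0 : ℝ) := by
      filter_upwards [hvmem] with w hw
      exact hode w hw
    have hd : HasDerivAt (fun w => -deriv m w + m w - deriv f w)
        (-deriv (deriv m) v + deriv m v - deriv (deriv f) v) v :=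
      (((hmd' v).hasDerivAt.neg).add (hmd v).hasDerivAt).sub (hfd' v).hasDerivAt
    have h0 := hev0.deriv_eq
    rw [hd.deriv, deriv_const] at h0
    linarith
  -- p11
  have hfun1 : (fun u => Vf m f (u, x.2))
      = fun u : ℝ => m (u + (σ * x.2 - 1)) * (1 - σ * x.2) + f (u + (σ * x.2 - 1)) := by
    funext u
    simp only [Vf, vL, habs]
    ring_nf
  have hp11 : p11 (Vf m f) x
      = deriv (deriv m) v * (1 - σ * x.2) + deriv (deriv f) v := by
    unfold p11
    rw [hfun1]
    have e1 : (fun s => deriv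
          (fun u : ℝ => m (u + (σ * x.2 - 1)) * (1 - σ * x.2) + f (u + (σ * x.2 - 1))) s)
        = fun s : ℝ => deriv m (s + (σ * x.2 - 1)) * (1 - σ * x.2)
          + deriv f (s + (σ * x.2 - 1)) :=
      funext fun s => (L1 m f hmd hfd _ _ s).deriv
    rw [e1, (L1 (deriv m) (deriv f) hmd' hfd' (σ * x.2 - 1) (1 - σ * x.2) x.1).deriv,
      show x.1 + (σ * x.2 - 1) = v by rw [hv]; ring]
  -- p22
  have hev2 : (fun s => Vf m f (x.1, s)) =ᶠ[nhds x.2]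
      fun s : ℝ => m ((x.1 - 1) + σ * s) * (1 - σ * s) + f ((x.1 - 1) + σ * s) := by
    filter_upwards [hev] with s hs
    simp only [Vf, vL, hs]
    ring_nf
  have e2 : deriv (fun s : ℝ => m ((x.1 - 1) + σ * s) * (1 - σ * s) + f ((x.1 - 1) + σ * s))
      = fun s : ℝ => σ * (deriv m ((x.1 - 1) + σ * s) * (1 - σ * s) - m ((x.1 - 1) + σ * s)
        + deriv f ((x.1 - 1) + σ * s)) :=
    funext fun s => (L2a m f hmd hfd (x.1 - 1) 1 σ s).deriv
  have hp22 : p22 (Vf m f) x = σ * (σ * (deriv (deriv m) v * (1 - σ * x.2)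
      - deriv m v - deriv m v + deriv (deriv f) v)) := by
    have h22 : p22 (Vf m f) x = deriv (deriv (fun s => Vf m f (x.1, s))) x.2 := rfl
    rw [h22, Filter.EventuallyEq.deriv_eq (e2 ▸ hev2.deriv)]
    have hD := ((L2b (deriv m) m (deriv f) hmd' hmd hfd' (x.1 - 1) 1 σ x.2).const_mul σ).deriv
    rw [hD, show (x.1 - 1) + σ * x.2 = v from hv.symm]
  -- p12
  have hev12 : (fun s => deriv (fun u => Vf m f (u, s)) x.1) =ᶠ[nhds x.2]
      fun s : ℝ => deriv m ((x.1 - 1) + σ * s) * (1 - σ * s) + deriv f ((x.1 - 1) + σ * s) := by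
    filter_upwards [hev] with s hs
    have hfun : (fun u => Vf m f (u, s))
        = fun u : ℝ => m (u + (σ * s - 1)) * (1 - σ * s) + f (u + (σ * s - 1)) := by
      funext u
      simp only [Vf, vL, hs]
      ring_nf
    rw [hfun, (L1 m f hmd hfd (σ * s - 1) (1 - σ * s) x.1).deriv,
      show x.1 + (σ * s - 1) = (x.1 - 1) + σ * s by ring]
  have hp12 : p12 (Vf m f) x
      = σ * (deriv (deriv m) v * (1 - σ * x.2) - deriv m v + deriv (deriv f) v) := by
    unfold p12
    rw [Filter.EventuallyEq.deriv_eq hev12,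
      (L2a (deriv m) (deriv f) hmd' hfd' (x.1 - 1) 1 σ x.2).deriv,
      show (x.1 - 1) + σ * x.2 = v from hv.symm]
  unfold SolvesStrangeEq
  rw [hp11, hp22, hp12, hf'']
  rcases hσ with rfl | rfl <;> ring

lemma interior_vL_mem {v₁ v₂ : ℝ} {x : ℝ × ℝ} (hx : x ∈ interior (SigmaL v₁ v₂)) :
    vL x ∈ Set.Ioo v₁ v₂ := by
  rw [mem_interior_iff_mem_nhds, Metric.mem_nhds_iff] at hx
  obtain ⟨ε, hε, hball⟩ := hx
  have hmem : ∀ δ : ℝ, |δ| < ε → ((x.1 + δ, x.2) : ℝ × ℝ) ∈ SigmaL v₁ v₂ := by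
    intro δ hδ
    apply hball
    rw [Metric.mem_ball, Prod.dist_eq]
    apply max_lt
    · simpa [Real.dist_eq] using hδ
    · simpa using hε
  have h1 := (hmem (ε / 2) (by rw [abs_of_pos (by linarith : (0:ℝ) < ε / 2)]; linarith)).2
  have h2 := (hmem (-(ε / 2))
    (by rw [abs_neg, abs_of_pos (by linarith : (0:ℝ) < ε / 2)]; linarith)).2
  rw [Set.mem_Icc] at h1 h2
  have e1 : vL ((x.1 + ε / 2, x.2) : ℝ × ℝ) = vL x + ε / 2 := by
    show x.1 + ε / 2 - 1 + |x.2| = x.1 - 1 + |x.2| + ε / 2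
    ring
  have e2 : vL ((x.1 + -(ε / 2), x.2) : ℝ × ℝ) = vL x - ε / 2 := by
    show x.1 + -(ε / 2) - 1 + |x.2| = x.1 - 1 + |x.2| - ε / 2
    ring
  rw [e1] at h1
  rw [e2] at h2
  exact ⟨by linarith [h2.1], by linarith [h1.2]⟩

lemma part3 (f m : ℝ → ℝ) (hf : ContDiff ℝ 2 f) (hm : ContDiff ℝ 2 m) {v₁ v₂ : ℝ}
    (hode : ∀ v ∈ Set.Icc v₁ v₂, -deriv m v + m v - deriv f v = 0)
    (x : ℝ × ℝ) (hx : x ∈ interior (SigmaL v₁ v₂)) (hx2 : x.2 ≠ 0) :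
    SolvesStrangeEq (Vf m f) x := by
  have hIoo : vL x ∈ Set.Ioo v₁ v₂ := interior_vL_mem hx
  rcases hx2.lt_or_gt with h2 | h2
  · refine part3gen f m hf hm hode (-1) (Or.inr rfl) x ?_ ?_
    · filter_upwards [Iio_mem_nhds h2] with s hs
      rw [abs_of_neg hs]
      ring
    · have e : x.1 - 1 + (-1) * x.2 = vL x := by
        simp only [vL, abs_of_neg h2]
        ring
      rw [e]
      exact Icc_mem_nhds hIoo.1 hIoo.2
  · refine part3gen f m hf hm hode 1 (Or.inl rfl) x ?_ ?_
    · filter_upwards [Ioi_mem_nhds h2] with s hs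
      rw [abs_of_pos hs]
      ring
    · have e : x.1 - 1 + 1 * x.2 = vL x := by
        simp only [vL, abs_of_pos h2]
        ring
      rw [e]
      exact Icc_mem_nhds hIoo.1 hIoo.2

end St10
/-- left tangents / left horizontal herringbone. -/
theorem statement10 (f m : ℝ → ℝ) (v₁ v₂ : ℝ) (hv : v₁ < v₂)
    (hf : ContDiff ℝ 2 f) (hm : ContDiff ℝ 2 m)
    (hode : ∀ v ∈ Set.Icc v₁ v₂, -deriv m v + m v - deriv f v = 0)
    (hcc : ∀ v ∈ Set.Icc v₁ v₂, 0 ≤ deriv (deriv m) v) :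
    ContDiffOn ℝ 1 (fun x : ℝ × ℝ => m (vL x) * (x.1 - vL x) + f (vL x))
      (SigmaL v₁ v₂) ∧
    DiagConcaveOn (fun x : ℝ × ℝ => m (vL x) * (x.1 - vL x) + f (vL x))
      (SigmaL v₁ v₂) ∧
    ∀ x ∈ interior (SigmaL v₁ v₂), x.2 ≠ 0 →
      SolvesStrangeEq (fun x : ℝ × ℝ => m (vL x) * (x.1 - vL x) + f (vL x)) x := by
  refine ⟨St10.part1 f m hf hm hode, St10.part2 f m hf hm hode hcc, fun x hx hx2 =>
    St10.part3 f m hf hm hode x hx hx2⟩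

end
end

section
/- Let f : ℝ → ℝ be twice continuously differentiable and suppose that for every u ∈ ℝ the integral ∫_{−∞}^{u} f'(t) e^{t} dt converges absolutely; define m(u) = e^{−u} ∫_{−∞}^{u} f'(t) e^{t} dt. If m''(v) ≤ 0 for all v ∈ (−∞, v₂), then V(x) = m(v_R(x))·(x₁ − v_R(x)) + f(v_R(x)), with v_R(x) = x₁ + 1 − |x₂|, is a C¹-smooth diagonally concave function on Σ_R(−∞, v₂) = {x ∈ Σ : v_R(x) ≤ v₂}, satisfying (∂²V/∂x₁² + ∂²V/∂x₂²)² = 4(∂²V/∂x₁∂x₂)² at every interior point with x₂ ≠ 0. -/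
open MeasureTheory Set

noncomputable section

lemma m_hasDerivAt (f m : ℝ → ℝ) (hf : ContDiff ℝ 2 f)
    (hint : ∀ u : ℝ, IntegrableOn (fun t => deriv f t * Real.exp t) (Set.Iic u))
    (hm : ∀ u : ℝ, m u = Real.exp (-u) * ∫ t in Set.Iic u, deriv f t * Real.exp t)
    (u : ℝ) : HasDerivAt m (deriv f u - m u) u := by
  set g : ℝ → ℝ := fun t => deriv f t * Real.exp t with hg
  have hgc : Continuous g := (hf.continuous_deriv one_le_two).mul Real.continuous_exp
  set F : ℝ → ℝ := fun w => ∫ t in Set.Iic w, g t with hF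
  have hFd : HasDerivAt F (g u) u := by
    have h1 : ∀ w, F w = F (u - 1) + ∫ t in (u-1)..w, g t := by
      intro w
      have := intervalIntegral.integral_Iic_sub_Iic (μ := volume) (f := g) (hint (u-1)) (hint w)
      simp only [hF]
      linarith [this]
    have h2 : HasDerivAt (fun w => F (u-1) + ∫ t in (u-1)..w, g t) (g u) u := by
      have hii : IntervalIntegrable g volume (u-1) u := by
        refine IntegrableOn.intervalIntegrable ?_
        exact (hint u).mono_set (fun t ht => le_trans ht.2 (by simp [le_max_iff]))
      exact (intervalIntegral.integral_hasDerivAt_right hii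
        hgc.stronglyMeasurable.stronglyMeasurableAtFilter hgc.continuousAt).const_add _
    exact h2.congr_of_eventuallyEq (Filter.Eventually.of_forall (fun w => (h1 w)))
  have hme : m = fun w => Real.exp (-w) * F w := funext hm
  have hexp : HasDerivAt (fun w : ℝ => Real.exp (-w)) (-Real.exp (-u)) u := by
    simpa using (hasDerivAt_neg u).exp
  have := hexp.mul hFd
  rw [show (fun w : ℝ => Real.exp (-w)) * F = m from hme.symm] at this
  refine this.congr_deriv ?_
  rw [hm u]
  simp only [hg]
  have h3 : Real.exp (-u) * (deriv f u * Real.exp u) = deriv f u := by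
    rw [mul_comm (deriv f u), ← mul_assoc, ← Real.exp_add]; simp
  ring_nf
  ring_nf at h3
  linarith [h3]


def Vfn (f m : ℝ → ℝ) : ℝ × ℝ → ℝ := fun x => m (vR x) * (x.1 - vR x) + f (vR x)

def Lfn (m m1 : ℝ → ℝ) (x : ℝ × ℝ) : ℝ × ℝ →L[ℝ] ℝ :=
  (m1 (vR x) * |x.2| + m (vR x)) • (ContinuousLinearMap.fst ℝ ℝ ℝ)
    + (-(m1 (vR x) * x.2)) • (ContinuousLinearMap.snd ℝ ℝ ℝ)

lemma Lfn_apply (m m1 : ℝ → ℝ) (x p : ℝ × ℝ) :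
    Lfn m m1 x p = (m1 (vR x) * |x.2| + m (vR x)) * p.1 - m1 (vR x) * x.2 * p.2 := by
  simp [Lfn, smul_eq_mul]; ring

lemma hasFDerivAt_W (f m m1 : ℝ → ℝ) (hm1 : ∀ u, HasDerivAt m (m1 u) u)
    (hf' : ∀ u, HasDerivAt f (m u + m1 u) u) (ε : ℝ) (hε : ε * ε = 1) (y : ℝ × ℝ) :
    HasFDerivAt (fun y : ℝ × ℝ => m (y.1 + 1 - ε * y.2) * (ε * y.2 - 1) + f (y.1 + 1 - ε * y.2))
      ((m1 (y.1 + 1 - ε * y.2) * (ε * y.2) + m (y.1 + 1 - ε * y.2)) •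
          (ContinuousLinearMap.fst ℝ ℝ ℝ)
        + (-(m1 (y.1 + 1 - ε * y.2) * y.2)) • (ContinuousLinearMap.snd ℝ ℝ ℝ)) y := by
  have hv : HasFDerivAt (fun y : ℝ × ℝ => y.1 + 1 - ε * y.2)
      (ContinuousLinearMap.fst ℝ ℝ ℝ - ε • ContinuousLinearMap.snd ℝ ℝ ℝ) y := by
    have := ((hasFDerivAt_fst (𝕜 := ℝ) (E := ℝ) (F := ℝ) (p := y)).add_const (1 : ℝ)).sub
      ((hasFDerivAt_snd (𝕜 := ℝ) (E := ℝ) (F := ℝ) (p := y)).const_mul ε)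
    exact this
  set v := y.1 + 1 - ε * y.2 with hvdef
  have h1 : HasFDerivAt (fun y : ℝ × ℝ => m (y.1 + 1 - ε * y.2))
      (m1 v • (ContinuousLinearMap.fst ℝ ℝ ℝ - ε • ContinuousLinearMap.snd ℝ ℝ ℝ)) y :=
    (hm1 v).comp_hasFDerivAt y hv
  have h2 : HasFDerivAt (fun y : ℝ × ℝ => ε * y.2 - 1)
      (ε • ContinuousLinearMap.snd ℝ ℝ ℝ) y := by
    have := ((hasFDerivAt_snd (𝕜 := ℝ) (E := ℝ) (F := ℝ) (p := y)).const_mul ε).sub_const (1 : ℝ)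
    convert this using 1
  have h4 : HasFDerivAt (fun y : ℝ × ℝ => f (y.1 + 1 - ε * y.2))
      ((m v + m1 v) • (ContinuousLinearMap.fst ℝ ℝ ℝ - ε • ContinuousLinearMap.snd ℝ ℝ ℝ)) y :=
    (hf' v).comp_hasFDerivAt y hv
  have h5 := (h1.mul h2).add h4
  refine h5.congr_fderiv (Eq.symm (ContinuousLinearMap.ext fun p => ?_))
  simp only [ContinuousLinearMap.add_apply, ContinuousLinearMap.smul_apply,
    ContinuousLinearMap.sub_apply, ContinuousLinearMap.coe_fst', ContinuousLinearMap.coe_snd',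
    smul_eq_mul]
  linear_combination (m1 v * y.2 * p.2) * hε

lemma hasFDerivAt_Vfn (f m m1 : ℝ → ℝ) (hm1 : ∀ u, HasDerivAt m (m1 u) u)
    (hf' : ∀ u, HasDerivAt f (m u + m1 u) u) (x : ℝ × ℝ) :
    HasFDerivAt (Vfn f m) (Lfn m m1 x) x := by
  rcases lt_trichotomy x.2 0 with hx2 | hx2 | hx2
  · -- x.2 < 0 : use ε = -1
    have hW := hasFDerivAt_W f m m1 hm1 hf' (-1) (by norm_num) x
    have heq : Vfn f m =ᶠ[nhds x]
        (fun y : ℝ × ℝ => m (y.1 + 1 - (-1) * y.2) * ((-1) * y.2 - 1) + f (y.1 + 1 - (-1) * y.2)) := by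
      have hopen : IsOpen {y : ℝ × ℝ | y.2 < 0} := isOpen_lt continuous_snd continuous_const
      filter_upwards [hopen.mem_nhds hx2] with y hy
      have : |y.2| = -y.2 := abs_of_neg hy
      simp only [Vfn, vR, this]
      ring_nf
    have hL : (m1 (x.1 + 1 - (-1) * x.2) * ((-1) * x.2) + m (x.1 + 1 - (-1) * x.2)) •
          (ContinuousLinearMap.fst ℝ ℝ ℝ)
        + (-(m1 (x.1 + 1 - (-1) * x.2) * x.2)) • (ContinuousLinearMap.snd ℝ ℝ ℝ)
        = Lfn m m1 x := by
      refine ContinuousLinearMap.ext fun p => ?_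
      rw [Lfn_apply]
      simp only [ContinuousLinearMap.add_apply, ContinuousLinearMap.smul_apply,
        ContinuousLinearMap.coe_fst', ContinuousLinearMap.coe_snd', smul_eq_mul,
        vR, abs_of_neg hx2]
      ring
    rw [show HasFDerivAt (Vfn f m) (Lfn m m1 x) x ↔ _ from heq.hasFDerivAt_iff, ← hL]
    exact hW
  · -- x.2 = 0
    have hW := hasFDerivAt_W f m m1 hm1 hf' 1 (by norm_num) x
    have hL : (m1 (x.1 + 1 - 1 * x.2) * (1 * x.2) + m (x.1 + 1 - 1 * x.2)) •
          (ContinuousLinearMap.fst ℝ ℝ ℝ)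
        + (-(m1 (x.1 + 1 - 1 * x.2) * x.2)) • (ContinuousLinearMap.snd ℝ ℝ ℝ)
        = Lfn m m1 x := by
      refine ContinuousLinearMap.ext fun p => ?_
      rw [Lfn_apply]
      simp only [ContinuousLinearMap.add_apply, ContinuousLinearMap.smul_apply,
        ContinuousLinearMap.coe_fst', ContinuousLinearMap.coe_snd', smul_eq_mul, vR, hx2]
      norm_num
    rw [hL] at hW
    set W : ℝ × ℝ → ℝ := fun y => m (y.1 + 1 - 1 * y.2) * (1 * y.2 - 1) + f (y.1 + 1 - 1 * y.2)
      with hWdef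
    set N : ℝ × ℝ → ℝ × ℝ := fun y => (y.1, |y.2|) with hNdef
    have hNx : N x = x := by
      rw [hNdef]; ext <;> simp [hx2]
    have hVW : ∀ y, Vfn f m y = W (N y) := by
      intro y
      simp only [Vfn, vR, hWdef, hNdef]
      ring
    have h1 := hW.isLittleO
    have hNt : Filter.Tendsto N (nhds x) (nhds x) := by
      have hc : ContinuousAt N x := by
        rw [hNdef]; exact (continuous_fst.prodMk continuous_snd.abs).continuousAt
      rwa [ContinuousAt, hNx] at hc
    have h2 := h1.comp_tendsto hNt
    have h3 : ((fun x' : ℝ × ℝ => x' - x) ∘ N) =O[nhds x] fun y => y - x := by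
      have hNx' : ∀ y : ℝ × ℝ, ((fun x' : ℝ × ℝ => x' - x) ∘ N) y = N y - N x := by
        intro y; simp [Function.comp, hNx]
      rw [funext hNx']
      refine Asymptotics.isBigO_of_le _ fun y => ?_
      rw [Prod.norm_def, Prod.norm_def]
      refine max_le_max ?_ ?_
      · simp [hNdef]
      · simp only [hNdef, Prod.snd_sub, Real.norm_eq_abs]
        exact abs_abs_sub_abs_le_abs_sub _ _
    have h4 := h2.trans_isBigO h3
    refine HasFDerivAt.of_isLittleO (h4.congr' (Filter.Eventually.of_forall fun y => ?_)
      Filter.EventuallyEq.rfl)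
    show W (N y) - W x - Lfn m m1 x (((fun x' : ℝ × ℝ => x' - x) ∘ N) y)
        = Vfn f m y - Vfn f m x - Lfn m m1 x (y - x)
    rw [show W x = W (N x) from by rw [hNx], ← hVW, ← hVW, Lfn_apply, Lfn_apply]
    have h5 : (((fun x' : ℝ × ℝ => x' - x) ∘ N) y).1 = (y - x).1 := by simp [hNdef]
    rw [h5, hx2]
    ring
  · -- x.2 > 0 : ε = 1
    have hW := hasFDerivAt_W f m m1 hm1 hf' 1 (by norm_num) x
    have heq : Vfn f m =ᶠ[nhds x]
        (fun y : ℝ × ℝ => m (y.1 + 1 - 1 * y.2) * (1 * y.2 - 1) + f (y.1 + 1 - 1 * y.2)) := by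
      have hopen : IsOpen {y : ℝ × ℝ | 0 < y.2} := isOpen_lt continuous_const continuous_snd
      filter_upwards [hopen.mem_nhds hx2] with y hy
      have : |y.2| = y.2 := abs_of_pos hy
      simp only [Vfn, vR, this]
      ring_nf
    have hL : (m1 (x.1 + 1 - 1 * x.2) * (1 * x.2) + m (x.1 + 1 - 1 * x.2)) •
          (ContinuousLinearMap.fst ℝ ℝ ℝ)
        + (-(m1 (x.1 + 1 - 1 * x.2) * x.2)) • (ContinuousLinearMap.snd ℝ ℝ ℝ)
        = Lfn m m1 x := by
      refine ContinuousLinearMap.ext fun p => ?_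
      rw [Lfn_apply]
      simp only [ContinuousLinearMap.add_apply, ContinuousLinearMap.smul_apply,
        ContinuousLinearMap.coe_fst', ContinuousLinearMap.coe_snd', smul_eq_mul,
        vR, abs_of_pos hx2]
      ring
    rw [show HasFDerivAt (Vfn f m) (Lfn m m1 x) x ↔ _ from heq.hasFDerivAt_iff, ← hL]
    exact hW



lemma contDiff_Vfn (f m m1 : ℝ → ℝ) (hm1 : ∀ u, HasDerivAt m (m1 u) u)
    (hf' : ∀ u, HasDerivAt f (m u + m1 u) u) (hm1c : Continuous m1) :
    ContDiff ℝ 1 (Vfn f m) := by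
  have hmc : Continuous m := Differentiable.continuous (fun u => (hm1 u).differentiableAt)
  rw [contDiff_one_iff_fderiv]
  refine ⟨fun x => (hasFDerivAt_Vfn f m m1 hm1 hf' x).differentiableAt, ?_⟩
  have heq : (fun x => fderiv ℝ (Vfn f m) x) = fun x => Lfn m m1 x :=
    funext fun x => (hasFDerivAt_Vfn f m m1 hm1 hf' x).fderiv
  show Continuous (fun x => fderiv ℝ (Vfn f m) x)
  rw [heq]
  have hvRc : Continuous vR := by
    have : vR = fun x : ℝ × ℝ => x.1 + 1 - |x.2| := rfl
    rw [this]; continuity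
  unfold Lfn
  exact (((hm1c.comp hvRc).mul continuous_snd.abs).add (hmc.comp hvRc)).smul continuous_const
    |>.add (((hm1c.comp hvRc).mul continuous_snd).neg.smul continuous_const)

lemma hasDerivAt_line (f m m1 : ℝ → ℝ) (hm1 : ∀ u, HasDerivAt m (m1 u) u)
    (hf' : ∀ u, HasDerivAt f (m u + m1 u) u) (β : ℝ) (x : ℝ × ℝ) (t : ℝ) :
    HasDerivAt (fun t => Vfn f m (x.1 + β * t, x.2 + t))
      ((m1 (vR (x.1 + β * t, x.2 + t)) * |x.2 + t| + m (vR (x.1 + β * t, x.2 + t))) * β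
        - m1 (vR (x.1 + β * t, x.2 + t)) * (x.2 + t)) t := by
  have hc : HasDerivAt (fun t : ℝ => ((x.1 + β * t, x.2 + t) : ℝ × ℝ)) ((β, 1) : ℝ × ℝ) t := by
    have h1 : HasDerivAt (fun t : ℝ => x.1 + β * t) β t := by
      simpa using ((hasDerivAt_id t).const_mul β).const_add x.1
    have h2 : HasDerivAt (fun t : ℝ => x.2 + t) 1 t := by
      simpa using (hasDerivAt_id t).const_add x.2
    exact h1.prodMk h2
  have := (hasFDerivAt_Vfn f m m1 hm1 hf' ((x.1 + β * t, x.2 + t) : ℝ × ℝ)).comp_hasDerivAt t hc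
  refine this.congr_deriv ?_
  rw [Lfn_apply]
  simp

lemma concaveOn_line_one (f m m1 m2 : ℝ → ℝ) (v₂ : ℝ)
    (hm1 : ∀ u, HasDerivAt m (m1 u) u) (hf' : ∀ u, HasDerivAt f (m u + m1 u) u)
    (hm1' : ∀ u, HasDerivAt m1 (m2 u) u) (hm1c : Continuous m1)
    (hm2 : ∀ v, v < v₂ → m2 v ≤ 0) (x : ℝ × ℝ) :
    ConcaveOn ℝ {t : ℝ | (x.1 + 1 * t, x.2 + t) ∈ SigmaRle v₂}
      (fun t : ℝ => Vfn f m (x.1 + 1 * t, x.2 + t)) := by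
  set D := {t : ℝ | (x.1 + 1 * t, x.2 + t) ∈ SigmaRle v₂} with hDdef
  have hmemD : ∀ t : ℝ, t ∈ D ↔ |x.2 + t| ≤ 1 ∧ x.1 + 1 * t + 1 - |x.2 + t| ≤ v₂ := by
    intro t
    simp [hDdef, SigmaRle, SigmaSet, vR]
  have hD : Convex ℝ D := by
    refine convex_iff_ordConnected.mpr ⟨fun t₁ h₁ t₂ h₂ t ht => ?_⟩
    rw [hmemD] at h₁ h₂ ⊢
    obtain ⟨ht1, ht2⟩ := ht
    have ha1 := abs_le.1 h₁.1
    have ha2 := abs_le.1 h₂.1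
    have habs : |x.2 + t₂| - |x.2 + t| ≤ t₂ - t := by
      have h5 := abs_sub_abs_le_abs_sub (x.2 + t₂) (x.2 + t)
      have h6 : |x.2 + t₂ - (x.2 + t)| = t₂ - t := by
        rw [show x.2 + t₂ - (x.2 + t) = t₂ - t by ring]
        exact abs_of_nonneg (by linarith)
      linarith
    constructor
    · rw [abs_le]; constructor <;> linarith
    · linarith [h₂.2]
  -- derivative function
  set G : ℝ → ℝ := fun t =>
    m1 (x.1 + 1 * t + 1 - |x.2 + t|) * |x.2 + t| + m (x.1 + 1 * t + 1 - |x.2 + t|)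
      - m1 (x.1 + 1 * t + 1 - |x.2 + t|) * (x.2 + t) with hGdef
  have hker : ∀ t : ℝ, HasDerivAt (fun t : ℝ => Vfn f m (x.1 + 1 * t, x.2 + t)) (G t) t := by
    intro t
    have := hasDerivAt_line f m m1 hm1 hf' 1 x t
    convert this using 1
    simp [hGdef, vR]
  have hmc : Continuous m := Differentiable.continuous (fun u => (hm1 u).differentiableAt)
  -- the lower-piece smooth extension
  set H : ℝ → ℝ := fun t =>
    m (x.1 + x.2 + 1 + 2 * t) - 2 * m1 (x.1 + x.2 + 1 + 2 * t) * (x.2 + t) with hHdef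
  have hGH : ∀ t : ℝ, x.2 + t ≤ 0 → G t = H t := by
    intro t ht
    rw [hGdef, hHdef]
    simp only [abs_of_nonpos ht]
    ring_nf
  have hGK : ∀ t : ℝ, 0 ≤ x.2 + t → G t = m (x.1 + 1 - x.2) := by
    intro t ht
    rw [hGdef]
    simp only [abs_of_nonneg ht]
    ring_nf
  have hl : ∀ t : ℝ, HasDerivAt (fun t : ℝ => x.1 + x.2 + 1 + 2 * t) 2 t := by
    intro t; simpa using ((hasDerivAt_id t).const_mul 2).const_add (x.1 + x.2 + 1)
  have hH : ∀ t : ℝ, HasDerivAt H (-4 * m2 (x.1 + x.2 + 1 + 2 * t) * (x.2 + t)) t := by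
    intro t
    have h1 : HasDerivAt (fun t : ℝ => m (x.1 + x.2 + 1 + 2 * t))
        (m1 (x.1 + x.2 + 1 + 2 * t) * 2) t := (hm1 _).comp t (hl t)
    have h2 : HasDerivAt (fun t : ℝ => m1 (x.1 + x.2 + 1 + 2 * t))
        (m2 (x.1 + x.2 + 1 + 2 * t) * 2) t := (hm1' _).comp t (hl t)
    have h3 : HasDerivAt (fun t : ℝ => x.2 + t) 1 t := by
      simpa using (hasDerivAt_id t).const_add x.2
    have h4 := (h2.const_mul 2).mul h3
    have h5 := h1.sub h4
    refine h5.congr_deriv ?_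
    ring
  have hHc : Continuous H := Differentiable.continuous (fun t => (hH t).differentiableAt)
  have hint_lt : ∀ t ∈ interior D, x.2 + t < 0 → x.1 + x.2 + 1 + 2 * t < v₂ := by
    intro t ht hneg
    obtain ⟨ε, hε, hball⟩ := Metric.mem_nhds_iff.1 (mem_interior_iff_mem_nhds.1 ht)
    set δ := min (ε / 2) (-(x.2 + t) / 2) with hδdef
    have hδpos : 0 < δ := lt_min (by linarith) (by linarith)
    have htδ : t + δ ∈ D := by
      refine hball ?_
      rw [Metric.mem_ball, Real.dist_eq]
      rw [show t + δ - t = δ by ring, abs_of_pos hδpos]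
      calc δ ≤ ε / 2 := min_le_left _ _
        _ < ε := by linarith
    have hneg' : x.2 + (t + δ) ≤ 0 := by
      have : δ ≤ -(x.2 + t) / 2 := min_le_right _ _
      linarith
    rw [hmemD] at htδ
    have := htδ.2
    rw [abs_of_nonpos (by linarith : x.2 + (t + δ) ≤ 0)] at this
    linarith
  have hIccD : ∀ a b : ℝ, a ∈ interior D → b ∈ interior D → Icc a b ⊆ interior D := by
    intro a b ha hb
    exact (hD.interior.ordConnected).out ha hb
  have hHanti : ∀ a b : ℝ, a ≤ b → b ≤ -x.2 → Icc a b ⊆ interior D → H b ≤ H a := by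
    intro a b hab hbτ hsub
    have hanti : AntitoneOn H (Icc a b) := by
      refine antitoneOn_of_deriv_nonpos (convex_Icc a b) hHc.continuousOn
        (fun t _ => (hH t).differentiableAt.differentiableWithinAt) ?_
      intro t ht
      rw [interior_Icc] at ht
      rw [(hH t).deriv]
      have h1 : x.2 + t < 0 := by linarith [ht.2]
      have h2 := hint_lt t (hsub ⟨ht.1.le, ht.2.le⟩) h1
      have h3 := hm2 _ h2
      nlinarith
    exact hanti (left_mem_Icc.2 hab) (right_mem_Icc.2 hab) hab
  refine AntitoneOn.concaveOn_of_deriv hD ?_ ?_ ?_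
  · exact ((contDiff_Vfn f m m1 hm1 hf' hm1c).continuous.comp (by continuity)).continuousOn
  · exact fun t _ => (hker t).differentiableAt.differentiableWithinAt
  · intro a ha b hb hab
    rw [(hker a).deriv, (hker b).deriv]
    have hIcc := hIccD a b ha hb
    rcases le_or_gt b (-x.2) with h1 | h1
    · rw [hGH a (by linarith), hGH b (by linarith)]
      exact hHanti a b hab h1 hIcc
    · rcases le_or_gt (-x.2) a with h2 | h2
      · rw [hGK a (by linarith), hGK b (by linarith)]
      · rw [hGH a (by linarith), hGK b (by linarith)]
        have hKH : m (x.1 + 1 - x.2) = H (-x.2) := by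
          rw [hHdef]
          simp only
          rw [show x.1 + x.2 + 1 + 2 * -x.2 = x.1 + 1 - x.2 by ring]
          ring
        rw [hKH]
        refine hHanti a (-x.2) (by linarith) le_rfl (fun t ht => hIcc ⟨ht.1, by linarith [ht.2]⟩)



lemma Vfn_even (f m : ℝ → ℝ) (a b : ℝ) : Vfn f m (a, -b) = Vfn f m (a, b) := by
  simp [Vfn, vR]

lemma SigmaRle_even (v₂ a b : ℝ) : ((a, -b) : ℝ × ℝ) ∈ SigmaRle v₂ ↔ (a, b) ∈ SigmaRle v₂ := by
  simp [SigmaRle, SigmaSet, vR]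

lemma concaveOn_line_neg (f m m1 m2 : ℝ → ℝ) (v₂ : ℝ)
    (hm1 : ∀ u, HasDerivAt m (m1 u) u) (hf' : ∀ u, HasDerivAt f (m u + m1 u) u)
    (hm1' : ∀ u, HasDerivAt m1 (m2 u) u) (hm1c : Continuous m1)
    (hm2 : ∀ v, v < v₂ → m2 v ≤ 0) (x : ℝ × ℝ) :
    ConcaveOn ℝ {t : ℝ | (x.1 + (-1) * t, x.2 + t) ∈ SigmaRle v₂}
      (fun t : ℝ => Vfn f m (x.1 + (-1) * t, x.2 + t)) := by
  have hcon := concaveOn_line_one f m m1 m2 v₂ hm1 hf' hm1' hm1c hm2 ((x.1, -x.2) : ℝ × ℝ)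
  set A : ℝ →ᵃ[ℝ] ℝ := (-LinearMap.id : ℝ →ₗ[ℝ] ℝ).toAffineMap with hA
  have hAapp : ∀ t : ℝ, A t = -t := fun t => rfl
  have hc2 := hcon.comp_affineMap A
  have hset : A ⁻¹' {t : ℝ | ((x.1, -x.2).1 + 1 * t, (x.1, -x.2).2 + t) ∈ SigmaRle v₂}
      = {t : ℝ | (x.1 + (-1) * t, x.2 + t) ∈ SigmaRle v₂} := by
    ext t
    simp only [Set.mem_preimage, Set.mem_setOf_eq, hAapp]
    rw [show x.1 + 1 * (-t) = x.1 + (-1) * t by ring, show -x.2 + -t = -(x.2 + t) by ring]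
    exact SigmaRle_even v₂ _ _
  have hfun : (fun t : ℝ => Vfn f m ((x.1, -x.2).1 + 1 * t, (x.1, -x.2).2 + t)) ∘ A
      = fun t : ℝ => Vfn f m (x.1 + (-1) * t, x.2 + t) := by
    funext t
    show Vfn f m (x.1 + 1 * (-t), -x.2 + -t) = _
    rw [show x.1 + 1 * (-t) = x.1 + (-1) * t by ring, show -x.2 + -t = -(x.2 + t) by ring]
    exact Vfn_even f m _ _
  rw [hset, hfun] at hc2
  exact hc2



lemma strangeEq (f m m1 m2 : ℝ → ℝ)
    (hm1 : ∀ u, HasDerivAt m (m1 u) u) (hf' : ∀ u, HasDerivAt f (m u + m1 u) u)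
    (hm1' : ∀ u, HasDerivAt m1 (m2 u) u)
    (x : ℝ × ℝ) (hx2 : x.2 ≠ 0) : SolvesStrangeEq (Vfn f m) x := by
  have hslice1 : ∀ c s : ℝ, deriv (fun u => Vfn f m (u, c)) s
      = m1 (s + 1 - |c|) * |c| + m (s + 1 - |c|) := by
    intro c s
    have heq : (fun u : ℝ => Vfn f m (u, c))
        = fun u : ℝ => m (u + 1 - |c|) * (|c| - 1) + f (u + 1 - |c|) := by
      funext u; simp only [Vfn, vR]; ring
    rw [heq]
    have h1 : HasDerivAt (fun u : ℝ => u + 1 - |c|) 1 s := by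
      simpa using ((hasDerivAt_id s).add_const 1).sub_const |c|
    have h2 := (hm1 (s + 1 - |c|)).comp s h1
    have h3 := (hf' (s + 1 - |c|)).comp s h1
    have h4 := (h2.mul_const (|c| - 1)).add h3
    have h5 : HasDerivAt (fun u : ℝ => m (u + 1 - |c|) * (|c| - 1) + f (u + 1 - |c|))
        (m1 (s + 1 - |c|) * |c| + m (s + 1 - |c|)) s := by
      refine h4.congr_deriv ?_
      try simp only [Function.comp_apply, id_eq]
      ring
    exact h5.deriv
  have hone : ∀ (a : ℝ), HasDerivAt (fun s : ℝ => s + 1 - a) 1 x.1 := fun a => by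
    simpa using ((hasDerivAt_id x.1).add_const 1).sub_const a
  have hp11 : p11 (Vfn f m) x = m2 (vR x) * |x.2| + m1 (vR x) := by
    unfold p11
    have heq : (fun s : ℝ => deriv (fun u => Vfn f m (u, x.2)) s)
        = fun s : ℝ => m1 (s + 1 - |x.2|) * |x.2| + m (s + 1 - |x.2|) := funext (hslice1 x.2)
    rw [heq]
    have h2 := (((hm1' (x.1 + 1 - |x.2|)).comp x.1 (hone _)).mul_const |x.2|).add
      ((hm1 (x.1 + 1 - |x.2|)).comp x.1 (hone _))
    rw [HasDerivAt.deriv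
      (f := fun s : ℝ => m1 (s + 1 - |x.2|) * |x.2| + m (s + 1 - |x.2|)) h2]
    simp only [Function.comp_apply, vR]; ring
  have hp12 : p12 (Vfn f m) x = -(m2 (vR x) * x.2) := by
    unfold p12
    have heq : (fun s : ℝ => deriv (fun u => Vfn f m (u, s)) x.1)
        = fun s : ℝ => m1 (x.1 + 1 - |s|) * |s| + m (x.1 + 1 - |s|) :=
      funext fun s => hslice1 s x.1
    rw [heq]
    rcases hx2.lt_or_gt with h | h
    · have hev : (fun s : ℝ => m1 (x.1 + 1 - |s|) * |s| + m (x.1 + 1 - |s|))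
          =ᶠ[nhds x.2] (fun s : ℝ => m1 (x.1 + 1 + s) * (-s) + m (x.1 + 1 + s)) := by
        filter_upwards [isOpen_Iio.mem_nhds (show x.2 ∈ Iio (0:ℝ) from h)] with s hs
        rw [Set.mem_Iio] at hs
        rw [abs_of_neg hs]; ring_nf
      rw [hev.deriv_eq]
      have h1 : HasDerivAt (fun s : ℝ => x.1 + 1 + s) 1 x.2 := by
        simpa using (hasDerivAt_id x.2).const_add (x.1 + 1)
      have hneg : HasDerivAt (fun s : ℝ => -s) (-1) x.2 := by
        exact hasDerivAt_neg x.2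
      have h2 := (((hm1' (x.1 + 1 + x.2)).comp x.2 h1).mul hneg).add
        ((hm1 (x.1 + 1 + x.2)).comp x.2 h1)
      rw [HasDerivAt.deriv
        (f := fun s : ℝ => m1 (x.1 + 1 + s) * (-s) + m (x.1 + 1 + s)) h2]
      simp only [Function.comp_apply, id_eq]
      rw [show vR x = x.1 + 1 + x.2 by simp [vR, abs_of_neg h]]
      ring
    · have hev : (fun s : ℝ => m1 (x.1 + 1 - |s|) * |s| + m (x.1 + 1 - |s|))
          =ᶠ[nhds x.2] (fun s : ℝ => m1 (x.1 + 1 - s) * s + m (x.1 + 1 - s)) := by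
        filter_upwards [isOpen_Ioi.mem_nhds (show x.2 ∈ Ioi (0:ℝ) from h)] with s hs
        rw [Set.mem_Ioi] at hs
        rw [abs_of_pos hs]
      rw [hev.deriv_eq]
      have h1' : HasDerivAt (fun s : ℝ => x.1 + 1 - s) (-1) x.2 := by
        have := (hasDerivAt_id x.2).neg.const_add (x.1 + 1)
        simpa [sub_eq_add_neg] using this
      have h2 := (((hm1' (x.1 + 1 - x.2)).comp x.2 h1').mul (hasDerivAt_id x.2)).add
        ((hm1 (x.1 + 1 - x.2)).comp x.2 h1')
      rw [HasDerivAt.deriv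
        (f := fun s : ℝ => m1 (x.1 + 1 - s) * s + m (x.1 + 1 - s)) h2]
      simp only [Function.comp_apply, id_eq]
      rw [show vR x = x.1 + 1 - x.2 by simp [vR, abs_of_pos h]]
      ring
  have hp22 : p22 (Vfn f m) x = m2 (vR x) * |x.2| - m1 (vR x) := by
    unfold p22
    rcases hx2.lt_or_gt with h | h
    · have he1 : (fun u : ℝ => Vfn f m (x.1, u)) =ᶠ[nhds x.2]
          (fun u : ℝ => m (x.1 + 1 + u) * (-u - 1) + f (x.1 + 1 + u)) := by
        filter_upwards [isOpen_Iio.mem_nhds (show x.2 ∈ Iio (0:ℝ) from h)] with u hu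
        rw [Set.mem_Iio] at hu
        simp only [Vfn, vR, abs_of_neg hu]; ring_nf
      have he2 := he1.deriv
      rw [he2.deriv_eq]
      have h1 : ∀ u : ℝ, HasDerivAt (fun s : ℝ => x.1 + 1 + s) 1 u := fun u => by
        simpa using (hasDerivAt_id u).const_add (x.1 + 1)
      have hdF : deriv (fun u : ℝ => m (x.1 + 1 + u) * (-u - 1) + f (x.1 + 1 + u))
          = fun u : ℝ => -(m1 (x.1 + 1 + u) * u) := by
        funext u
        have ha : HasDerivAt (fun s : ℝ => -s - 1) (-1) u := by
          simpa [sub_eq_add_neg] using ((hasDerivAt_id u).neg.add_const (-1))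
        have h2 := (((hm1 (x.1 + 1 + u)).comp u (h1 u)).mul ha).add
          ((hf' (x.1 + 1 + u)).comp u (h1 u))
        have h3 : HasDerivAt (fun u : ℝ => m (x.1 + 1 + u) * (-u - 1) + f (x.1 + 1 + u))
            (-(m1 (x.1 + 1 + u) * u)) u := by
          refine h2.congr_deriv ?_
          try simp only [Function.comp_apply, id_eq]
          ring
        exact h3.deriv
      rw [hdF]
      have h2 := ((hm1' (x.1 + 1 + x.2)).comp x.2 (h1 x.2)).mul (hasDerivAt_id x.2)
      rw [HasDerivAt.deriv
        (f := fun u : ℝ => -(m1 (x.1 + 1 + u) * u)) h2.neg]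
      simp only [Function.comp_apply, id_eq]
      rw [show vR x = x.1 + 1 + x.2 by simp [vR, abs_of_neg h], abs_of_neg h]
      ring
    · have he1 : (fun u : ℝ => Vfn f m (x.1, u)) =ᶠ[nhds x.2]
          (fun u : ℝ => m (x.1 + 1 - u) * (u - 1) + f (x.1 + 1 - u)) := by
        filter_upwards [isOpen_Ioi.mem_nhds (show x.2 ∈ Ioi (0:ℝ) from h)] with u hu
        rw [Set.mem_Ioi] at hu
        simp only [Vfn, vR, abs_of_pos hu]; ring_nf
      have he2 := he1.deriv
      rw [he2.deriv_eq]
      have h1 : ∀ u : ℝ, HasDerivAt (fun s : ℝ => x.1 + 1 - s) (-1) u := fun u => by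
        have := (hasDerivAt_id u).neg.const_add (x.1 + 1)
        simpa [sub_eq_add_neg] using this
      have hdF : deriv (fun u : ℝ => m (x.1 + 1 - u) * (u - 1) + f (x.1 + 1 - u))
          = fun u : ℝ => -(m1 (x.1 + 1 - u) * u) := by
        funext u
        have ha : HasDerivAt (fun s : ℝ => s - 1) 1 u := by
          simpa using (hasDerivAt_id u).sub_const 1
        have h2 := (((hm1 (x.1 + 1 - u)).comp u (h1 u)).mul ha).add
          ((hf' (x.1 + 1 - u)).comp u (h1 u))
        have h3 : HasDerivAt (fun u : ℝ => m (x.1 + 1 - u) * (u - 1) + f (x.1 + 1 - u))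
            (-(m1 (x.1 + 1 - u) * u)) u := by
          refine h2.congr_deriv ?_
          try simp only [Function.comp_apply, id_eq]
          ring
        exact h3.deriv
      rw [hdF]
      have h2 := ((hm1' (x.1 + 1 - x.2)).comp x.2 (h1 x.2)).mul (hasDerivAt_id x.2)
      rw [HasDerivAt.deriv
        (f := fun u : ℝ => -(m1 (x.1 + 1 - u) * u)) h2.neg]
      simp only [Function.comp_apply, id_eq]
      rw [show vR x = x.1 + 1 - x.2 by simp [vR, abs_of_pos h], abs_of_pos h]
      ring
  unfold SolvesStrangeEq
  rw [hp11, hp22, hp12]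
  linear_combination (4 * m2 (vR x) ^ 2) * (sq_abs x.2)


/-- infinite right tangent domain. -/
theorem statement11 (f m : ℝ → ℝ) (v₂ : ℝ) (hf : ContDiff ℝ 2 f)
    (hint : ∀ u : ℝ, IntegrableOn (fun t => deriv f t * Real.exp t) (Set.Iic u))
    (hm : ∀ u : ℝ, m u = Real.exp (-u) * ∫ t in Set.Iic u, deriv f t * Real.exp t)
    (hcc : ∀ v : ℝ, v < v₂ → deriv (deriv m) v ≤ 0) :
    ContDiffOn ℝ 1 (fun x : ℝ × ℝ => m (vR x) * (x.1 - vR x) + f (vR x))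
      (SigmaRle v₂) ∧
    DiagConcaveOn (fun x : ℝ × ℝ => m (vR x) * (x.1 - vR x) + f (vR x))
      (SigmaRle v₂) ∧
    ∀ x ∈ interior (SigmaRle v₂), x.2 ≠ 0 →
      SolvesStrangeEq (fun x : ℝ × ℝ => m (vR x) * (x.1 - vR x) + f (vR x)) x := by
  have hm1 : ∀ u, HasDerivAt m (deriv f u - m u) u := fun u => m_hasDerivAt f m hf hint hm u
  set m1 : ℝ → ℝ := fun u => deriv f u - m u with hm1def
  have hm1 : ∀ u, HasDerivAt m (m1 u) u := hm1
  have hfd : Differentiable ℝ f := hf.differentiable (by norm_num)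
  have hdf1 : ContDiff ℝ 1 (deriv f) := by
    have h2 : ContDiff ℝ ((1 : ℕ) + 1) f := by exact_mod_cast hf
    exact (contDiff_succ_iff_deriv.mp h2).2.2
  have hf' : ∀ u, HasDerivAt f (m u + m1 u) u := by
    intro u
    have h := (hfd u).hasDerivAt
    refine h.congr_deriv ?_
    simp [hm1def]
  set m2 : ℝ → ℝ := fun u => deriv (deriv f) u - m1 u with hm2def
  have hm1' : ∀ u, HasDerivAt m1 (m2 u) u := by
    intro u
    have h1 : HasDerivAt (deriv f) (deriv (deriv f) u) u :=
      (hdf1.differentiable one_ne_zero u).hasDerivAt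
    exact h1.sub (hm1 u)
  have hm1c : Continuous m1 :=
    (hdf1.continuous).sub (Differentiable.continuous fun u => (hm1 u).differentiableAt)
  have hm2le : ∀ v, v < v₂ → m2 v ≤ 0 := by
    intro v hv
    have h0 := hcc v hv
    have hdm : deriv m = m1 := funext fun u => (hm1 u).deriv
    rw [hdm, (hm1' v).deriv] at h0
    exact h0
  refine ⟨?_, ⟨?_, ?_⟩, ?_⟩
  · exact (contDiff_Vfn f m m1 hm1 hf' hm1c).contDiffOn
  · exact fun x _ => concaveOn_line_one f m m1 m2 v₂ hm1 hf' hm1' hm1c hm2le x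
  · exact fun x _ => concaveOn_line_neg f m m1 m2 v₂ hm1 hf' hm1' hm1c hm2le x
  · exact fun x _ hx2 => strangeEq f m m1 m2 hm1 hf' hm1' x hx2

end
end
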